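/- arXiv:2507.04688 — 6 statements merged into one kernel-verified Lean document; each statement's English description precedes it below -/
import Mathlib

section
/- Landsberg's formula: for a prime p, the number of n×m matrices A over the field Z_p such that the solution set of Ax = 0 in Z_p^m has exactly p^j elements equals binom(m,j)_p · ∏_{i=0}^{m-j-1}(p^n - p^i). -/
/-- The Gaussian binomial coefficient `binom(n,k)_q` evaluated at `q`. -/
def gaussBinom (q : ℕ) : ℕ → ℕ → ℕ
  | _, 0 => 1
  | 0, _ + 1 => 0
  | n + 1, k + 1 => gaussBinom q n k + q ^ (k + 1) * gaussBinom q n (k + 1)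

lemma gaussBinom_eq_zero (q : ℕ) : ∀ n k, n < k → gaussBinom q n k = 0
  | 0, _ + 1, _ => rfl
  | n + 1, k + 1, h => by
    rw [gaussBinom, gaussBinom_eq_zero q n k (by omega),
      gaussBinom_eq_zero q n (k + 1) (by omega), mul_zero, add_zero]

lemma gaussBinom_self (q : ℕ) : ∀ n, gaussBinom q n n = 1
  | 0 => rfl
  | n + 1 => by
    rw [gaussBinom, gaussBinom_self q n, gaussBinom_eq_zero q n (n + 1) (by omega),
      mul_zero, add_zero]

lemma gaussBinom_ratio (q m : ℕ) : ∀ k, gaussBinom q m k + q ^ (k + 1) * gaussBinom q m (k + 1)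
    = q ^ (m - k) * gaussBinom q m k + gaussBinom q m (k + 1) := by
  induction m with
  | zero =>
    intro k
    cases k with
    | zero => simp [gaussBinom]
    | succ k =>
      rw [gaussBinom_eq_zero q 0 (k + 1) (by omega), gaussBinom_eq_zero q 0 (k + 2) (by omega)]
      simp
  | succ m ih =>
    intro k
    cases k with
    | zero =>
      have h := ih 0
      simp only [gaussBinom, Nat.sub_zero, pow_one, mul_one] at h ⊢
      zify at h ⊢
      linear_combination (q : ℤ) * h
    | succ k =>
      by_cases hk : k < m
      · obtain ⟨t, ht⟩ : ∃ t, m - k = t + 1 := ⟨m - k - 1, by omega⟩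
        have h1 := ih k
        have h2 := ih (k + 1)
        rw [ht] at h1
        rw [show m - (k + 1) = t from by omega] at h2
        rw [show m + 1 - (k + 1) = t + 1 from by omega]
        simp only [gaussBinom]
        zify at h1 h2 ⊢
        linear_combination h1 + (q : ℤ) ^ (k + 2) * h2
      · rw [gaussBinom_eq_zero q (m + 1) (k + 2) (by omega)]
        by_cases hk2 : k = m
        · subst hk2
          simp
        · rw [gaussBinom_eq_zero q (m + 1) (k + 1) (by omega)]
          simp

lemma prod_pow_sub_succ (q n s : ℕ) :
    ∏ i ∈ Finset.range (s + 1), (q ^ (n + 1) - q ^ i)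
      = (q ^ (n + 1) - 1) * (q ^ s * ∏ i ∈ Finset.range s, (q ^ n - q ^ i)) := by
  rw [Finset.prod_range_succ']
  have h : ∀ i : ℕ, q ^ (n + 1) - q ^ (i + 1) = q * (q ^ n - q ^ i) := fun i => by
    rw [pow_succ, pow_succ, ← Nat.sub_mul, mul_comm]
  simp only [h]
  rw [Finset.prod_mul_distrib, Finset.prod_const, Finset.card_range, pow_zero]
  ring

lemma formula_step (q n m j : ℕ) (hq : 2 ≤ q) :
    gaussBinom q m j * ∏ i ∈ Finset.range (m - j), (q ^ (n + 1) - q ^ i)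
      = q ^ (m - j) * (gaussBinom q m j * ∏ i ∈ Finset.range (m - j), (q ^ n - q ^ i))
        + (q ^ m - q ^ (m - j - 1)) *
          (gaussBinom q m (j + 1) * ∏ i ∈ Finset.range (m - j - 1), (q ^ n - q ^ i)) := by
  rcases lt_or_ge j m with hj | hj
  · obtain ⟨s, hs⟩ : ∃ s, m = s + 1 + j := ⟨m - j - 1, by omega⟩
    subst hs
    rw [show s + 1 + j - j = s + 1 from by omega, show s + 1 - 1 = s from by omega]
    rcases le_or_gt s n with hsn | hsn
    · rw [prod_pow_sub_succ, Finset.prod_range_succ]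
      have hr := gaussBinom_ratio q (s + 1 + j) j
      rw [show s + 1 + j - j = s + 1 from by omega] at hr
      have h1 : q ^ s ≤ q ^ n := Nat.pow_le_pow_right (by omega) hsn
      have h2 : q ^ s ≤ q ^ (s + 1 + j) := Nat.pow_le_pow_right (by omega) (by omega)
      have h3 : 1 ≤ q ^ (n + 1) := Nat.one_le_pow _ _ (by omega)
      zify [h1, h2, h3] at hr ⊢
      linear_combination (-(∏ i ∈ Finset.range s, ((q ^ n - q ^ i : ℕ) : ℤ)) * (q : ℤ) ^ s) * hr
    · rw [Finset.prod_eq_zero (Finset.mem_range.mpr (show n + 1 < s + 1 from by omega))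
          (by simp), Finset.prod_eq_zero (Finset.mem_range.mpr (show n < s + 1 from by omega))
          (by simp), Finset.prod_eq_zero (Finset.mem_range.mpr (show n < s from by omega))
          (by simp)]
      simp
  · rw [show m - j = 0 from by omega, gaussBinom_eq_zero q m (j + 1) (by omega)]
    simp

section counting

open Matrix LinearMap Module

variable (p : ℕ) [Fact p.Prime]

private lemma pcard (V : Type*) [AddCommGroup V] [Module (ZMod p) V] [Finite V] :
    Nat.card V = p ^ Module.finrank (ZMod p) V := by
  haveI : NeZero p := ⟨(Fact.out : p.Prime).ne_zero⟩
  haveI : Fintype V := Fintype.ofFinite V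
  rw [Nat.card_eq_fintype_card, card_eq_pow_finrank (K := ZMod p), ZMod.card]

private lemma card_solutions {n m : ℕ} (A : Matrix (Fin n) (Fin m) (ZMod p)) :
    Nat.card {x : Fin m → ZMod p // A.mulVec x = 0}
      = p ^ finrank (ZMod p) (LinearMap.ker A.mulVecLin) := by
  have e : {x : Fin m → ZMod p // A.mulVec x = 0} ≃ LinearMap.ker A.mulVecLin :=
    Equiv.subtypeEquivRight fun x => by simp [LinearMap.mem_ker]
  rw [Nat.card_congr e, pcard p]

private def dotD (m : ℕ) : (Fin m → ZMod p) →ₗ[ZMod p] Module.Dual (ZMod p) (Fin m → ZMod p) where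
  toFun b :=
    { toFun := fun y => dotProduct b y
      map_add' := fun y z => dotProduct_add b y z
      map_smul' := fun c y => dotProduct_smul c b y }
  map_add' := fun b c => LinearMap.ext fun y => add_dotProduct b c y
  map_smul' := fun c b => LinearMap.ext fun y => smul_dotProduct c b y

private lemma dotD_surj (m : ℕ) : Function.Surjective (dotD p m) := by
  rw [← LinearMap.injective_iff_surjective_of_finrank_eq_finrank
    (Subspace.dual_finrank_eq (K := ZMod p) (V := Fin m → ZMod p)).symm]
  intro b c h
  funext i
  have h2 := congrArg (fun f : Module.Dual (ZMod p) (Fin m → ZMod p) => f (Pi.single i 1)) h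
  simpa [dotD, dotProduct_single] using h2

private def resL {m : ℕ} (W : Submodule (ZMod p) (Fin m → ZMod p)) :
    (Fin m → ZMod p) →ₗ[ZMod p] Module.Dual (ZMod p) W :=
  (W.subtype.dualMap).comp (dotD p m)

private lemma resL_apply {m : ℕ} (W : Submodule (ZMod p) (Fin m → ZMod p)) (b : Fin m → ZMod p)
    (y : W) : resL p W b y = dotProduct b (y : Fin m → ZMod p) := rfl

private lemma resL_surj {m : ℕ} (W : Submodule (ZMod p) (Fin m → ZMod p)) :
    Function.Surjective (resL p W) :=
  (LinearMap.dualMap_surjective_of_injective W.injective_subtype).comp (dotD_surj p m)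

private lemma card_ker_resL {m : ℕ} (W : Submodule (ZMod p) (Fin m → ZMod p)) :
    Nat.card (LinearMap.ker (resL p W)) = p ^ (m - finrank (ZMod p) W) := by
  rw [pcard p]
  congr 1
  have h := LinearMap.finrank_range_add_finrank_ker (resL p W)
  rw [LinearMap.range_eq_top.mpr (resL_surj p W), finrank_top, Subspace.dual_finrank_eq,
    Module.finrank_fin_fun] at h
  omega

private lemma finrank_ker_zero {W : Type*} [AddCommGroup W] [Module (ZMod p) W]
    [FiniteDimensional (ZMod p) W] {f : Module.Dual (ZMod p) W} (hf : f = 0) :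
    finrank (ZMod p) (LinearMap.ker f) = finrank (ZMod p) W := by
  rw [hf, LinearMap.ker_zero, finrank_top]

private lemma finrank_ker_ne {W : Type*} [AddCommGroup W] [Module (ZMod p) W]
    [FiniteDimensional (ZMod p) W] {f : Module.Dual (ZMod p) W} (hf : f ≠ 0) :
    finrank (ZMod p) (LinearMap.ker f) = finrank (ZMod p) W - 1 ∧ 1 ≤ finrank (ZMod p) W := by
  have h := LinearMap.finrank_range_add_finrank_ker f
  have hr : finrank (ZMod p) (LinearMap.range f) = 1 := by
    have hle : finrank (ZMod p) (LinearMap.range f) ≤ 1 := by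
      simpa using Submodule.finrank_le (LinearMap.range f)
    have hpos : 0 < finrank (ZMod p) (LinearMap.range f) :=
      Module.finrank_pos_iff.mpr (Submodule.nontrivial_iff_ne_bot.mpr
        (fun hb => hf (LinearMap.range_eq_bot.mp hb)))
    omega
  omega

private lemma card_solutions_cons {n m : ℕ} (B : Matrix (Fin n) (Fin m) (ZMod p))
    (b : Fin m → ZMod p) :
    Nat.card {x : Fin m → ZMod p // (Matrix.of (Fin.cons b fun i j => B i j)).mulVec x = 0}
      = p ^ finrank (ZMod p) (LinearMap.ker (resL p (LinearMap.ker B.mulVecLin) b)) := by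
  have key : ∀ x : Fin m → ZMod p,
      (Matrix.of (Fin.cons b fun i j => B i j)).mulVec x = 0
        ↔ B.mulVec x = 0 ∧ dotProduct b x = 0 := by
    intro x
    constructor
    · intro h
      refine ⟨funext fun i => ?_, ?_⟩
      · have h2 := congrFun h i.succ
        simpa [Matrix.mulVec, Fin.cons_succ] using h2
      · have h2 := congrFun h 0
        simpa [Matrix.mulVec, Fin.cons_zero] using h2
    · rintro ⟨h1, h2⟩
      funext i
      refine Fin.cases ?_ (fun i => ?_) i
      · simpa [Matrix.mulVec, Fin.cons_zero] using h2
      · have h3 := congrFun h1 i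
        simpa [Matrix.mulVec, Fin.cons_succ] using h3
  have e : {x : Fin m → ZMod p // (Matrix.of (Fin.cons b fun i j => B i j)).mulVec x = 0}
      ≃ LinearMap.ker (resL p (LinearMap.ker B.mulVecLin) b) :=
    { toFun := fun x => ⟨⟨x.1, by
        simp only [LinearMap.mem_ker, Matrix.mulVecLin_apply]
        exact ((key x.1).mp x.2).1⟩, by
        simp only [LinearMap.mem_ker, resL_apply]
        exact ((key x.1).mp x.2).2⟩
      invFun := fun y => ⟨(y.1 : Fin m → ZMod p), (key _).mpr ⟨by
        have h4 := y.1.2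
        simpa only [LinearMap.mem_ker, Matrix.mulVecLin_apply] using h4, by
        have h4 := y.2
        simpa only [LinearMap.mem_ker, resL_apply] using h4⟩⟩
      left_inv := fun x => rfl
      right_inv := fun y => rfl }
  rw [Nat.card_congr e, pcard p]

end counting
section counting2

open Matrix LinearMap Module

variable (p : ℕ) [Fact p.Prime]

private lemma fiber_card {n m j : ℕ} (B : Matrix (Fin n) (Fin m) (ZMod p)) :
    Nat.card {b : Fin m → ZMod p //
        Nat.card {x : Fin m → ZMod p // (Matrix.of (Fin.cons b fun i j => B i j)).mulVec x = 0}
          = p ^ j}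
      = (if Nat.card {x : Fin m → ZMod p // B.mulVec x = 0} = p ^ j then p ^ (m - j) else 0)
        + (if Nat.card {x : Fin m → ZMod p // B.mulVec x = 0} = p ^ (j + 1)
            then p ^ m - p ^ (m - j - 1) else 0) := by
  classical
  haveI : NeZero p := ⟨(Fact.out : p.Prime).ne_zero⟩
  set W := LinearMap.ker B.mulVecLin with hW
  set d := finrank (ZMod p) W with hd
  have hple : 2 ≤ p := (Fact.out : p.Prime).two_le
  have hpinj : ∀ a b : ℕ, p ^ a = p ^ b → a = b := fun a b h => Nat.pow_right_injective hple h
  have hsol : Nat.card {x : Fin m → ZMod p // B.mulVec x = 0} = p ^ d := card_solutions p B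
  have hcond : ∀ b : Fin m → ZMod p,
      (Nat.card {x : Fin m → ZMod p //
          (Matrix.of (Fin.cons b fun i j => B i j)).mulVec x = 0} = p ^ j)
        ↔ finrank (ZMod p) (LinearMap.ker (resL p W b)) = j := by
    intro b
    rw [card_solutions_cons]
    exact ⟨fun h => hpinj _ _ h, fun h => by rw [h]⟩
  have hQcard : Nat.card {b : Fin m → ZMod p // resL p W b = 0} = p ^ (m - d) := by
    rw [Nat.card_congr (Equiv.subtypeEquivRight
      (fun b => (LinearMap.mem_ker (f := resL p W)).symm))]
    exact card_ker_resL p W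
  by_cases h1 : d = j
  · rw [if_pos (by rw [hsol, h1]),
      if_neg (by rw [hsol]; exact fun hc => by have := hpinj _ _ hc; omega), add_zero]
    have hiff : ∀ b : Fin m → ZMod p,
        (Nat.card {x : Fin m → ZMod p //
            (Matrix.of (Fin.cons b fun i j => B i j)).mulVec x = 0} = p ^ j)
          ↔ resL p W b = 0 := by
      intro b
      rw [hcond b]
      constructor
      · intro h
        by_contra hne
        obtain ⟨hk, hdpos⟩ := finrank_ker_ne p hne
        omega
      · intro h
        rw [finrank_ker_zero p h]
        omega
    rw [Nat.card_congr (Equiv.subtypeEquivRight hiff), hQcard, h1]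
  · by_cases h2 : d = j + 1
    · rw [if_neg (by rw [hsol]; exact fun hc => h1 (hpinj _ _ hc)),
        if_pos (by rw [hsol, h2]), zero_add]
      have hiff : ∀ b : Fin m → ZMod p,
          (Nat.card {x : Fin m → ZMod p //
              (Matrix.of (Fin.cons b fun i j => B i j)).mulVec x = 0} = p ^ j)
            ↔ ¬ (resL p W b = 0) := by
        intro b
        rw [hcond b]
        constructor
        · intro h h0
          rw [finrank_ker_zero p h0] at h
          omega
        · intro hne
          obtain ⟨hk, hdpos⟩ := finrank_ker_ne p hne
          omega
      rw [Nat.card_congr (Equiv.subtypeEquivRight hiff), Nat.card_eq_fintype_card,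
        Fintype.card_subtype_compl]
      have hcf : Fintype.card (Fin m → ZMod p) = p ^ m := by
        simp [ZMod.card]
      rw [hcf]
      congr 1
      rw [← Nat.card_eq_fintype_card, hQcard, h2, Nat.sub_sub]
    · rw [if_neg (by rw [hsol]; exact fun hc => h1 (hpinj _ _ hc)),
        if_neg (by rw [hsol]; exact fun hc => h2 (hpinj _ _ hc)), add_zero]
      haveI : IsEmpty {b : Fin m → ZMod p //
          Nat.card {x : Fin m → ZMod p //
            (Matrix.of (Fin.cons b fun i j => B i j)).mulVec x = 0} = p ^ j} := by
        refine ⟨fun b => ?_⟩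
        have hc := (hcond b.1).mp b.2
        by_cases h0 : resL p W b.1 = 0
        · rw [finrank_ker_zero p h0] at hc
          omega
        · obtain ⟨hk, hdpos⟩ := finrank_ker_ne p h0
          omega
      exact Nat.card_of_isEmpty

private lemma step_count {n m : ℕ} (j : ℕ) :
    Nat.card {A : Matrix (Fin (n + 1)) (Fin m) (ZMod p) //
        Nat.card {x : Fin m → ZMod p // A.mulVec x = 0} = p ^ j}
      = p ^ (m - j) * Nat.card {B : Matrix (Fin n) (Fin m) (ZMod p) //
            Nat.card {x : Fin m → ZMod p // B.mulVec x = 0} = p ^ j}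
        + (p ^ m - p ^ (m - j - 1)) * Nat.card {B : Matrix (Fin n) (Fin m) (ZMod p) //
            Nat.card {x : Fin m → ZMod p // B.mulVec x = 0} = p ^ (j + 1)} := by
  classical
  haveI : NeZero p := ⟨(Fact.out : p.Prime).ne_zero⟩
  have key : ∀ (c : Matrix (Fin n) (Fin m) (ZMod p) → Prop) (K : ℕ) (inst : DecidablePred c),
      (∑ B : Matrix (Fin n) (Fin m) (ZMod p), if c B then K else 0)
        = K * Nat.card {B : Matrix (Fin n) (Fin m) (ZMod p) // c B} := by
    intro c K inst
    rw [Finset.sum_ite, Finset.sum_const, Finset.sum_const_zero, add_zero, smul_eq_mul,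
      Nat.card_eq_fintype_card, Fintype.card_subtype, mul_comm]
  set P : Matrix (Fin (n + 1)) (Fin m) (ZMod p) → Prop :=
    fun A => Nat.card {x : Fin m → ZMod p // A.mulVec x = 0} = p ^ j with hP
  let e : Matrix (Fin n) (Fin m) (ZMod p) × (Fin m → ZMod p)
      ≃ Matrix (Fin (n + 1)) (Fin m) (ZMod p) :=
    { toFun := fun x => Matrix.of (Fin.cons x.2 fun i j => x.1 i j)
      invFun := fun A => (Matrix.of fun i j => A i.succ j, fun j => A 0 j)
      left_inv := fun x => by
        refine Prod.ext ?_ ?_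
        · funext i j
          simp [Fin.cons_succ]
        · funext i
          simp [Fin.cons_zero]
      right_inv := fun A => by
        funext i j
        refine Fin.cases ?_ (fun i => ?_) i <;> simp [Fin.cons_zero, Fin.cons_succ] }
  have e1 : {A : Matrix (Fin (n + 1)) (Fin m) (ZMod p) // P A}
      ≃ Σ B : Matrix (Fin n) (Fin m) (ZMod p), {b : Fin m → ZMod p // P (e (B, b))} :=
    (Equiv.subtypeEquiv e fun x => Iff.rfl).symm.trans
      (Equiv.subtypeProdEquivSigmaSubtype fun B b => P (e (B, b)))
  rw [Nat.card_congr e1, Nat.card_eq_fintype_card, Fintype.card_sigma]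
  have hfib : ∀ B : Matrix (Fin n) (Fin m) (ZMod p),
      Fintype.card {b : Fin m → ZMod p // P (e (B, b))}
        = (if Nat.card {x : Fin m → ZMod p // B.mulVec x = 0} = p ^ j then p ^ (m - j) else 0)
          + (if Nat.card {x : Fin m → ZMod p // B.mulVec x = 0} = p ^ (j + 1)
              then p ^ m - p ^ (m - j - 1) else 0) := by
    intro B
    rw [← Nat.card_eq_fintype_card]
    exact fiber_card p B
  rw [Finset.sum_congr rfl fun B _ => hfib B, Finset.sum_add_distrib,
    key _ _ _, key _ _ _]

private lemma base_count {m : ℕ} (j : ℕ) :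
    Nat.card {A : Matrix (Fin 0) (Fin m) (ZMod p) //
        Nat.card {x : Fin m → ZMod p // A.mulVec x = 0} = p ^ j}
      = if j = m then 1 else 0 := by
  classical
  haveI : NeZero p := ⟨(Fact.out : p.Prime).ne_zero⟩
  have hple : 2 ≤ p := (Fact.out : p.Prime).two_le
  have hsol : ∀ A : Matrix (Fin 0) (Fin m) (ZMod p),
      Nat.card {x : Fin m → ZMod p // A.mulVec x = 0} = p ^ m := by
    intro A
    have h : ∀ x : Fin m → ZMod p, A.mulVec x = 0 := fun x => Subsingleton.elim _ _
    rw [Nat.card_congr (Equiv.subtypeUnivEquiv h), Nat.card_eq_fintype_card]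
    simp [ZMod.card]
  by_cases h : j = m
  · subst h
    rw [if_pos rfl, Nat.card_congr (Equiv.subtypeUnivEquiv fun A => hsol A)]
    haveI : Unique (Matrix (Fin 0) (Fin j) (ZMod p)) :=
      inferInstanceAs (Unique (Fin 0 → Fin j → ZMod p))
    exact Nat.card_unique
  · rw [if_neg h]
    haveI : IsEmpty {A : Matrix (Fin 0) (Fin m) (ZMod p) //
        Nat.card {x : Fin m → ZMod p // A.mulVec x = 0} = p ^ j} :=
      ⟨fun A => h (Nat.pow_right_injective hple (show p ^ j = p ^ m from A.2.symm.trans (hsol A.1)))⟩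
    exact Nat.card_of_isEmpty

private lemma main_count (m : ℕ) : ∀ n j : ℕ,
    Nat.card {A : Matrix (Fin n) (Fin m) (ZMod p) //
        Nat.card {x : Fin m → ZMod p // A.mulVec x = 0} = p ^ j}
      = gaussBinom p m j * ∏ i ∈ Finset.range (m - j), (p ^ n - p ^ i) := by
  intro n
  induction n with
  | zero =>
    intro j
    rw [base_count]
    by_cases h : j = m
    · subst h
      simp [gaussBinom_self]
    · rw [if_neg h]
      rcases lt_or_gt_of_ne h with hl | hg
      · rw [Finset.prod_eq_zero (Finset.mem_range.mpr (show 0 < m - j from by omega))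
          (by simp)]
        ring
      · rw [gaussBinom_eq_zero p m j hg]
        ring
  | succ n ih =>
    intro j
    rw [step_count, ih j, ih (j + 1)]
    exact (formula_step p n m j (Fact.out : p.Prime).two_le).symm

end counting2

theorem landsberg (p n m j : ℕ) (hp : p.Prime) (hn : 1 ≤ n) (hm : 1 ≤ m) (hj : j ≤ m) :
    Nat.card {A : Matrix (Fin n) (Fin m) (ZMod p) //
        Nat.card {x : Fin m → ZMod p // A.mulVec x = 0} = p ^ j} =
      gaussBinom p m j * ∏ i ∈ Finset.range (m - j), (p ^ n - p ^ i) := by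
  haveI : Fact p.Prime := ⟨hp⟩
  exact main_count p m n j
end

section
/- Let E(n×m, p^s, p^j) denote the number of n×m matrices A over Z_{p^s} such that Ax ≡ 0 (mod p^s) has exactly p^j solutions, and let Ẽ(n×m, p^s, p^j) count such matrices having at least one entry invertible mod p. Then E(n×m, p^s, p^j) = E(n×m, p^{s-1}, p^{j-m}) + Ẽ(n×m, p^s, p^j), where the first term is interpreted as 0 if j < m. -/
/-!
A matrix over `ℤ/p^(t+1)` without unit entries has all its entries divisible by `p`, so it is
`p • B'` for a lift `B'` of a unique matrix `B` over `ℤ/p^t`. Since `p • (B' x) = 0` exactly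
when `B' x ≡ 0 (mod p^t)`, the solutions of `(p • B') x = 0` are the lifts of the solutions of
`B y = 0`, and each of those has `p^m` lifts. Hence these matrices contribute
`E(n×m, p^t, p^(j-m))`.
-/

/-- `E p s n m j` is the number of `n × m` matrices `A` over `ℤ/p^s` such that
`A x ≡ 0 (mod p^s)` has exactly `p^j` solutions. -/
noncomputable def E (p s n m j : ℕ) : ℕ :=
  Nat.card {A : Matrix (Fin n) (Fin m) (ZMod (p ^ s)) //
    Nat.card {x : Fin m → ZMod (p ^ s) // A.mulVec x = 0} = p ^ j}

/-- `Etilde p s n m j` counts such matrices that moreover have at least one entry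
invertible mod `p` (i.e. a unit of `ℤ/p^s`). -/
noncomputable def Etilde (p s n m j : ℕ) : ℕ :=
  Nat.card {A : Matrix (Fin n) (Fin m) (ZMod (p ^ s)) //
    Nat.card {x : Fin m → ZMod (p ^ s) // A.mulVec x = 0} = p ^ j ∧
      ∃ k l, IsUnit (A k l)}

open Matrix

theorem Nat.card_eq_card_and_add_card_and_not {α : Type*} [Finite α] (P Q : α → Prop) :
    Nat.card {x // P x} = Nat.card {x // P x ∧ Q x} + Nat.card {x // P x ∧ ¬Q x} := by
  classical
  rw [← Nat.card_sum]
  exact Nat.card_congr ((Equiv.sumCompl fun x : {x // P x} => Q x).symm.trans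
    (Equiv.sumCongr (Equiv.subtypeSubtypeEquivSubtypeInter P Q)
      (Equiv.subtypeSubtypeEquivSubtypeInter P (¬Q ·))))

theorem Nat.card_and_mem_range {α β : Type*} {f : α → β} (hf : Function.Injective f)
    (P : β → Prop) : Nat.card {b // P b ∧ b ∈ Set.range f} = Nat.card {a // P (f a)} := by
  have := Nat.card_image_of_injective hf {a | P (f a)}
  rwa [← Set.preimage_ofPred_eq, Set.image_preimage_eq_inter_range] at this

theorem Nat.pow_mul_eq_pow_iff {p m j c : ℕ} (hp : 1 < p) (hc : 0 < c) :
    p ^ m * c = p ^ j ↔ m ≤ j ∧ c = p ^ (j - m) := by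
  by_cases hmj : m ≤ j
  · obtain ⟨k, rfl⟩ := Nat.exists_eq_add_of_le hmj
    rw [pow_add, Nat.add_sub_cancel_left, Nat.mul_right_inj (pow_pos (by omega) m).ne']
    simp
  · have : p ^ j < p ^ m * c :=
      (Nat.pow_lt_pow_right hp (by omega)).trans_le (Nat.le_mul_of_pos_right _ hc)
    simp [hmj, this.ne']

section CardComap

variable {G H : Type*} [AddGroup G] [AddGroup H] {f : G →+ H}

theorem AddMonoidHom.card_eq_card_mul_card_ker (hf : Function.Surjective f) :
    Nat.card G = Nat.card H * Nat.card f.ker := by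
  rw [← f.ker.card_mul_index, AddSubgroup.index_ker, AddMonoidHom.range_eq_top.mpr hf,
    AddSubgroup.card_top, mul_comm]

theorem AddSubgroup.card_comap_of_surjective [Finite G] (hf : Function.Surjective f)
    (K : AddSubgroup H) :
    Nat.card (K.comap f) = Nat.card K * Nat.card f.ker := by
  have : Finite H := Finite.of_surjective f hf
  refine Nat.eq_of_mul_eq_mul_right (Nat.pos_of_ne_zero K.index_ne_zero_of_finite) ?_
  calc Nat.card (K.comap f) * K.index = Nat.card G := by
        rw [← K.index_comap_of_surjective hf, card_mul_index]
    _ = Nat.card K * Nat.card f.ker * K.index := by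
        rw [f.card_eq_card_mul_card_ker hf, ← K.card_mul_index]; ring

end CardComap

namespace ZMod

variable (p t : ℕ)

abbrev reducePow : ZMod (p ^ (t + 1)) →+* ZMod (p ^ t) :=
  castHom (pow_dvd_pow p t.le_succ) _

/-- Multiplication by `p`, as a map `ℤ/p^t → ℤ/p^(t+1)`. Any other lift of `b` in place of
`cast b` gives the same value, by `natCast_mul_eq_natCast_mul_iff`. -/
def mulP (b : ZMod (p ^ t)) : ZMod (p ^ (t + 1)) :=
  p * cast b

variable {p t}

section

variable [NeZero p]

theorem natCast_mul_eq_zero_iff (z : ZMod (p ^ (t + 1))) :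
    (p : ZMod (p ^ (t + 1))) * z = 0 ↔ reducePow p t z = 0 := by
  have hz : reducePow p t z = (z.val : ZMod (p ^ t)) := by
    rw [reducePow, castHom_apply, cast_eq_val]
  conv_lhs => rw [← natCast_zmod_val z]
  rw [hz, ← Nat.cast_mul, natCast_eq_zero_iff, natCast_eq_zero_iff]
  generalize z.val = v
  rw [pow_succ', Nat.mul_dvd_mul_iff_left (Nat.pos_of_neZero p)]

theorem natCast_mul_eq_natCast_mul_iff (x y : ZMod (p ^ (t + 1))) :
    (p : ZMod (p ^ (t + 1))) * x = p * y ↔ reducePow p t x = reducePow p t y := by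
  rw [← sub_eq_zero, ← mul_sub, natCast_mul_eq_zero_iff, map_sub, sub_eq_zero]

theorem natCast_mul_eq_mulP (x : ZMod (p ^ (t + 1))) :
    (p : ZMod (p ^ (t + 1))) * x = mulP p t (reducePow p t x) := by
  rw [mulP, natCast_mul_eq_natCast_mul_iff, ringHom_map_cast]

theorem mulP_injective : Function.Injective (mulP p t) := by
  intro a b h
  rwa [mulP, mulP, natCast_mul_eq_natCast_mul_iff, ringHom_map_cast, ringHom_map_cast] at h

end

theorem range_mulP (hp : p.Prime) : Set.range (mulP p t) = {r | ¬IsUnit r} := by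
  have : NeZero p := ⟨hp.ne_zero⟩
  refine Set.ext fun r => ⟨?_, fun hr => ?_⟩
  · rintro ⟨b, rfl⟩ (h : IsUnit (mulP p t b))
    have hunit := isUnit_of_mul_isUnit_left (M := ZMod (p ^ (t + 1))) h
    rw [isUnit_iff_coprime, Nat.coprime_pow_right_iff t.succ_pos, Nat.coprime_self] at hunit
    exact hp.one_lt.ne' hunit
  · change ¬IsUnit r at hr
    rw [← natCast_zmod_val r, isUnit_iff_coprime, Nat.coprime_pow_right_iff t.succ_pos,
      Nat.coprime_comm, hp.coprime_iff_not_dvd, not_not] at hr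
    obtain ⟨c, hc⟩ := hr
    refine ⟨reducePow p t c, ?_⟩
    rw [← natCast_mul_eq_mulP, ← Nat.cast_mul, ← hc, natCast_zmod_val]

variable {ι κ : Type*}

theorem range_map_mulP (hp : p.Prime) :
    Set.range (fun B : Matrix ι κ (ZMod (p ^ t)) => B.map (mulP p t)) =
      {A | ∀ k l, ¬IsUnit (A k l)} := by
  have : NeZero p := ⟨hp.ne_zero⟩
  refine Set.ext fun A => ⟨?_, fun hA => ?_⟩
  · rintro ⟨B, rfl⟩ k l
    exact (range_mulP hp).subset ⟨B k l, rfl⟩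
  · choose B hB using fun k l => (range_mulP (t := t) hp).superset (hA k l)
    exact ⟨Matrix.of B, Matrix.ext hB⟩

section

variable [NeZero p]

theorem map_mulP_mulVec_eq_zero_iff [Fintype κ] (B : Matrix ι κ (ZMod (p ^ t)))
    (x : κ → ZMod (p ^ (t + 1))) :
    B.map (mulP p t) *ᵥ x = 0 ↔ B *ᵥ (reducePow p t ∘ x) = 0 := by
  have hB : (B.map cast).map (reducePow p t) = B := by ext; simp
  have hsmul : B.map (mulP p t) = (p : ZMod (p ^ (t + 1))) • B.map cast := rfl
  refine funext_iff.trans (Iff.trans (forall_congr' fun k => ?_) funext_iff.symm)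
  rw [hsmul, smul_mulVec, Pi.smul_apply, smul_eq_mul, Pi.zero_apply, natCast_mul_eq_zero_iff,
    RingHom.map_mulVec, hB, Pi.zero_apply]

theorem card_ker_map_mulP [Fintype κ] (B : Matrix ι κ (ZMod (p ^ t))) :
    Nat.card {x // B.map (mulP p t) *ᵥ x = 0} =
      p ^ Fintype.card κ * Nat.card {y // B *ᵥ y = 0} := by
  set π := (reducePow p t).toAddMonoidHom.compLeft κ
  have hπ : Function.Surjective π := (ringHom_surjective (reducePow p t)).comp_left
  have hker : Nat.card π.ker = p ^ Fintype.card κ := by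
    have := π.card_eq_card_mul_card_ker hπ
    rw [Nat.card_fun, Nat.card_fun, Nat.card_zmod, Nat.card_zmod, Nat.card_eq_fintype_card,
      ← pow_mul, ← pow_mul, Nat.succ_mul, pow_add] at this
    exact (Nat.eq_of_mul_eq_mul_left (pow_pos (Nat.pos_of_neZero p) _) this).symm
  calc Nat.card {x // B.map (mulP p t) *ᵥ x = 0}
      = Nat.card ((LinearMap.ker B.mulVecLin).toAddSubgroup.comap π) :=
        Nat.card_congr (Equiv.subtypeEquivRight fun x => map_mulP_mulVec_eq_zero_iff B x)
    _ = _ := by rw [AddSubgroup.card_comap_of_surjective hπ, hker, mul_comm]; rfl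

end

end ZMod

theorem E_reduce_general (p s n m j : ℕ) (hp : p.Prime) (hs : 2 ≤ s) :
    E p s n m j = (if m ≤ j then E p (s - 1) n m (j - m) else 0) + Etilde p s n m j := by
  obtain ⟨t, rfl⟩ : ∃ t, s = t + 1 := ⟨s - 1, by omega⟩
  have : NeZero p := ⟨hp.ne_zero⟩
  have hker_pos (B : Matrix (Fin n) (Fin m) (ZMod (p ^ t))) : 0 < Nat.card {y // B *ᵥ y = 0} :=
    have : Nonempty {y // B *ᵥ y = 0} := ⟨⟨0, mulVec_zero B⟩⟩
    Nat.card_pos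
  have hno_unit (A : Matrix (Fin n) (Fin m) (ZMod (p ^ (t + 1)))) :
      (¬∃ k l, IsUnit (A k l)) ↔
        A ∈ Set.range fun B : Matrix (Fin n) (Fin m) (ZMod (p ^ t)) => B.map (ZMod.mulP p t) := by
    simp [ZMod.range_map_mulP hp]
  rw [E, Nat.card_eq_card_and_add_card_and_not _ (fun A => ∃ k l, IsUnit (A k l)), add_comm,
    Nat.card_congr (Equiv.subtypeEquivRight fun A => and_congr_right' (hno_unit A)),
    Nat.card_and_mem_range (Matrix.map_injective ZMod.mulP_injective)]
  simp only [ZMod.card_ker_map_mulP, Fintype.card_fin,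
    Nat.pow_mul_eq_pow_iff hp.one_lt (hker_pos _)]
  split_ifs with hmj <;> simp [hmj, E, Etilde]

theorem E_reduce (p s n m j : ℕ) (hp : p.Prime) (hs : 2 ≤ s)
    (hn : 1 ≤ n) (hm : 1 ≤ m) (hj : j ≤ s * m) :
    E p s n m j = (if m ≤ j then E p (s - 1) n m (j - m) else 0) + Etilde p s n m j :=
  E_reduce_general p s n m j hp hs
end

section
/- The number of n×1 matrices A over Z_{p^s} such that Ax ≡ 0 (mod p^s) has exactly p^j solutions equals φ_n(p^{s-j}) for 0 ≤ j ≤ s (with φ_n(1) = 1), and equals 0 for j > s. -/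
/-- `phi n c` counts `n`-tuples with entries in `{1, ..., c}` having at least one
entry coprime to `c`. -/
def phi (n c : ℕ) : ℕ :=
  (Finset.filter (fun a : Fin n → ℕ => ∃ i, Nat.Coprime (a i) c)
    (Fintype.piFinset fun _ => Finset.Icc 1 c)).card

open Finset

/-- filter of a constant piFinset by a pointwise-forall predicate. -/
lemma piFilter {n : ℕ} {α : Type*} [DecidableEq α] (S : Finset α) (P : α → Prop)
    [DecidablePred P] :
    ((Fintype.piFinset fun _ : Fin n => S).filter fun a => ∀ i, P (a i)).card
      = (S.filter P).card ^ n := by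
  have h : ((Fintype.piFinset fun _ : Fin n => S).filter fun a => ∀ i, P (a i))
      = Fintype.piFinset fun _ : Fin n => S.filter P := by
    ext a
    simp [Fintype.mem_piFinset, forall_and]
  rw [h, Fintype.card_piFinset_const]

lemma count_dvd_val (p s t : ℕ) (hp : p.Prime) [NeZero (p ^ s)] (hts : t ≤ s) :
    (Finset.univ.filter fun x : ZMod (p ^ s) => p ^ t ∣ x.val).card = p ^ (s - t) := by
  have hpt : 0 < p ^ t := pow_pos hp.pos t
  have hmul : p ^ t * p ^ (s - t) = p ^ s := by
    rw [← pow_add, Nat.add_sub_cancel' hts]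
  rw [← Finset.card_range (p ^ (s - t))]
  apply Finset.card_nbij' (fun x => x.val / p ^ t)
    (fun k => ((p ^ t * k : ℕ) : ZMod (p ^ s)))
  · intro x hx
    simp only [mem_coe, mem_filter, mem_univ, true_and] at hx
    have hlt : x.val < p ^ s := ZMod.val_lt x
    simp only [mem_coe, mem_range]
    rw [Nat.div_lt_iff_lt_mul hpt, mul_comm, hmul]
    exact hlt
  · intro k hk
    simp only [mem_coe, mem_range] at hk
    have hlt : p ^ t * k < p ^ s := by
      rw [← hmul]
      exact (Nat.mul_lt_mul_left hpt).mpr hk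
    simp only [mem_coe, mem_filter, mem_univ, true_and]
    rw [ZMod.val_natCast, Nat.mod_eq_of_lt hlt]
    exact Dvd.intro k rfl
  · intro x hx
    simp only [mem_coe, mem_filter, mem_univ, true_and] at hx
    beta_reduce
    rw [Nat.mul_div_cancel' hx]
    exact ZMod.natCast_rightInverse x
  · intro k hk
    simp only [mem_coe, mem_range] at hk
    have hlt : p ^ t * k < p ^ s := by
      rw [← hmul]
      exact (Nat.mul_lt_mul_left hpt).mpr hk
    beta_reduce
    rw [ZMod.val_natCast, Nat.mod_eq_of_lt hlt, Nat.mul_div_cancel_left _ hpt]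

lemma mul_eq_zero_iff_dvd (p s : ℕ) [NeZero (p ^ s)] (a x : ZMod (p ^ s)) :
    a * x = 0 ↔ p ^ s ∣ a.val * x.val := by
  conv_lhs => rw [← ZMod.natCast_rightInverse a, ← ZMod.natCast_rightInverse x,
    ← Nat.cast_mul]
  exact ZMod.natCast_eq_zero_iff _ _

lemma sol_of_dvd (p s t : ℕ) [NeZero (p ^ s)] (hts : t ≤ s) (a x : ZMod (p ^ s))
    (ha : p ^ t ∣ a.val) (hx : p ^ (s - t) ∣ x.val) : a * x = 0 := by
  rw [mul_eq_zero_iff_dvd]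
  calc p ^ s = p ^ t * p ^ (s - t) := by rw [← pow_add, Nat.add_sub_cancel' hts]
  _ ∣ a.val * x.val := mul_dvd_mul ha hx

lemma dvd_of_sol (p s t : ℕ) (hp : p.Prime) [NeZero (p ^ s)] (hts : t < s)
    (a x : ZMod (p ^ s)) (ha : ¬ p ^ (t + 1) ∣ a.val) (h : a * x = 0) :
    p ^ (s - t) ∣ x.val := by
  rw [mul_eq_zero_iff_dvd] at h
  have hne : a.val ≠ 0 := by
    rintro h0
    exact ha (h0 ▸ dvd_zero _)
  set k := a.val.factorization p with hk
  have hkt : k ≤ t := by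
    by_contra hc
    exact ha ((hp.pow_dvd_iff_le_factorization hne).mpr (Nat.lt_of_not_le hc))
  have hks : k ≤ s := hkt.trans hts.le
  set c := a.val / p ^ k with hc
  have hcd : ¬ p ∣ c := Nat.not_dvd_ordCompl hp hne
  have heq : p ^ k * c = a.val := Nat.ordProj_mul_ordCompl_eq_self a.val p
  have h2 : p ^ k * p ^ (s - k) ∣ p ^ k * (c * x.val) := by
    rw [← pow_add, Nat.add_sub_cancel' hks, ← mul_assoc, heq]
    exact h
  have h3 : p ^ (s - k) ∣ c * x.val :=
    (mul_dvd_mul_iff_left (pow_ne_zero k hp.pos.ne')).mp h2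
  have hcop : Nat.Coprime (p ^ (s - k)) c :=
    ((hp.coprime_iff_not_dvd).mpr hcd).pow_left _
  have h4 : p ^ (s - k) ∣ x.val := hcop.dvd_of_dvd_mul_left h3
  exact dvd_trans (pow_dvd_pow p (Nat.sub_le_sub_left hkt s)) h4

variable {p s : ℕ}

lemma solCount_exact (n j : ℕ) (hp : p.Prime) [NeZero (p ^ s)]
    (a : Fin n → ZMod (p ^ s)) (hj : j < s)
    (h1 : ∀ i, p ^ j ∣ (a i).val) (h2 : ¬ ∀ i, p ^ (j + 1) ∣ (a i).val) :
    (Finset.univ.filter fun x : ZMod (p ^ s) => ∀ i, a i * x = 0).card = p ^ j := by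
  classical
  have hset : (Finset.univ.filter fun x : ZMod (p ^ s) => ∀ i, a i * x = 0)
      = Finset.univ.filter fun x : ZMod (p ^ s) => p ^ (s - j) ∣ x.val := by
    ext x
    simp only [mem_filter, mem_univ, true_and]
    constructor
    · intro h
      obtain ⟨i, hi⟩ := not_forall.mp h2
      exact dvd_of_sol p s j hp hj (a i) x hi (h i)
    · intro hx i
      exact sol_of_dvd p s j hj.le (a i) x (h1 i) hx
  rw [hset, count_dvd_val p s (s - j) hp (Nat.sub_le s j), Nat.sub_sub_self hj.le]

lemma solCount_le (n t : ℕ) (hp : p.Prime) [NeZero (p ^ s)]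
    (a : Fin n → ZMod (p ^ s)) (ht : t < s) (i : Fin n)
    (ha : ¬ p ^ (t + 1) ∣ (a i).val) :
    (Finset.univ.filter fun x : ZMod (p ^ s) => ∀ i, a i * x = 0).card ≤ p ^ t := by
  classical
  have hsub : (Finset.univ.filter fun x : ZMod (p ^ s) => ∀ i, a i * x = 0)
      ⊆ Finset.univ.filter fun x : ZMod (p ^ s) => p ^ (s - t) ∣ x.val := by
    intro x hx
    simp only [mem_filter, mem_univ, true_and] at hx ⊢
    exact dvd_of_sol p s t hp ht (a i) x ha (hx i)
  calc _ ≤ _ := Finset.card_le_card hsub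
  _ = p ^ (s - (s - t)) := count_dvd_val p s (s - t) hp (Nat.sub_le s t)
  _ = p ^ t := by rw [Nat.sub_sub_self ht.le]

lemma solCount_ge (n t : ℕ) (hp : p.Prime) [NeZero (p ^ s)]
    (a : Fin n → ZMod (p ^ s)) (ht : t ≤ s)
    (ha : ∀ i, p ^ t ∣ (a i).val) :
    p ^ t ≤ (Finset.univ.filter fun x : ZMod (p ^ s) => ∀ i, a i * x = 0).card := by
  classical
  have hsub : (Finset.univ.filter fun x : ZMod (p ^ s) => p ^ (s - t) ∣ x.val)
      ⊆ Finset.univ.filter fun x : ZMod (p ^ s) => ∀ i, a i * x = 0 := by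
    intro x hx
    simp only [mem_filter, mem_univ, true_and] at hx ⊢
    intro i
    exact sol_of_dvd p s t ht (a i) x (ha i) hx
  calc p ^ t = p ^ (s - (s - t)) := by rw [Nat.sub_sub_self ht]
  _ = _ := (count_dvd_val p s (s - t) hp (Nat.sub_le s t)).symm
  _ ≤ _ := Finset.card_le_card hsub

lemma classify_lt (n j : ℕ) (hp : p.Prime) [NeZero (p ^ s)] (hj : j < s) :
    (Finset.univ.filter fun a : Fin n → ZMod (p ^ s) =>
        (Finset.univ.filter fun x : ZMod (p ^ s) => ∀ i, a i * x = 0).card = p ^ j)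
      = (Finset.univ.filter fun a : Fin n → ZMod (p ^ s) => ∀ i, p ^ j ∣ (a i).val)
        \ (Finset.univ.filter fun a : Fin n → ZMod (p ^ s) =>
            ∀ i, p ^ (j + 1) ∣ (a i).val) := by
  classical
  ext a
  simp only [mem_filter, mem_univ, true_and, Finset.mem_sdiff]
  constructor
  · intro h
    have h1 : ∀ i, p ^ j ∣ (a i).val := by
      by_contra hc
      obtain ⟨i, hi⟩ := not_forall.mp hc
      have hj1 : 1 ≤ j := by
        rcases Nat.eq_zero_or_pos j with h0 | h0
        · exact absurd (h0 ▸ one_dvd _ : p ^ j ∣ (a i).val) hi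
        · exact h0
      have hi' : ¬ p ^ (j - 1 + 1) ∣ (a i).val := by
        rwa [Nat.sub_add_cancel hj1]
      have := solCount_le n (j - 1) hp a (lt_of_le_of_lt (Nat.sub_le j 1) hj) i hi'
      rw [h] at this
      exact absurd this (not_le.mpr (Nat.pow_lt_pow_right hp.one_lt
        (Nat.sub_lt hj1 one_pos)))
    refine ⟨h1, ?_⟩
    intro hc
    have := solCount_ge n (j + 1) hp a hj hc
    rw [h] at this
    exact absurd this (not_le.mpr (Nat.pow_lt_pow_right hp.one_lt (Nat.lt_succ_self j)))
  · rintro ⟨h1, h2⟩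
    exact solCount_exact n j hp a hj h1 h2

lemma classify_eq (n : ℕ) (hp : p.Prime) [NeZero (p ^ s)] (hs : 1 ≤ s) :
    (Finset.univ.filter fun a : Fin n → ZMod (p ^ s) =>
        (Finset.univ.filter fun x : ZMod (p ^ s) => ∀ i, a i * x = 0).card = p ^ s)
      = Finset.univ.filter fun a : Fin n → ZMod (p ^ s) => ∀ i, p ^ s ∣ (a i).val := by
  classical
  ext a
  simp only [mem_filter, mem_univ, true_and]
  constructor
  · intro h
    by_contra hc
    obtain ⟨i, hi⟩ := not_forall.mp hc
    have hi' : ¬ p ^ (s - 1 + 1) ∣ (a i).val := by rwa [Nat.sub_add_cancel hs]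
    have := solCount_le n (s - 1) hp a (Nat.sub_lt hs one_pos) i hi'
    rw [h] at this
    exact absurd this (not_le.mpr (Nat.pow_lt_pow_right hp.one_lt
      (Nat.sub_lt hs one_pos)))
  · intro h
    have ha : ∀ i, a i = 0 := by
      intro i
      have := Nat.eq_zero_of_dvd_of_lt (h i)
      rcases Nat.eq_zero_or_pos (a i).val with h0 | h0
      · exact (ZMod.val_eq_zero _).mp h0
      · exact absurd (ZMod.val_lt (a i)) (not_lt.mpr (Nat.le_of_dvd h0 (h i)))
    have : (Finset.univ.filter fun x : ZMod (p ^ s) => ∀ i, a i * x = 0)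
        = Finset.univ := by
      apply Finset.filter_true_of_mem
      intro x _ i
      rw [ha i, zero_mul]
    rw [this, Finset.card_univ, ZMod.card]

lemma count_V (n t : ℕ) (hp : p.Prime) [NeZero (p ^ s)] (ht : t ≤ s) :
    (Finset.univ.filter fun a : Fin n → ZMod (p ^ s) =>
        ∀ i, p ^ t ∣ (a i).val).card = p ^ ((s - t) * n) := by
  classical
  have : (Finset.univ : Finset (Fin n → ZMod (p ^ s)))
      = Fintype.piFinset fun _ : Fin n => Finset.univ := (Fintype.piFinset_univ).symm
  rw [this, piFilter _ (fun v : ZMod (p ^ s) => p ^ t ∣ v.val), count_dvd_val p s t hp ht, pow_mul]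

lemma phi_one (n : ℕ) (hn : 1 ≤ n) : phi n 1 = 1 := by
  classical
  rw [phi]
  have h : (Fintype.piFinset fun _ : Fin n => Finset.Icc 1 1).filter
      (fun a : Fin n → ℕ => ∃ i, Nat.Coprime (a i) 1)
      = Fintype.piFinset fun _ : Fin n => Finset.Icc 1 1 := by
    apply Finset.filter_true_of_mem
    intro a _
    exact ⟨⟨0, hn⟩, Nat.coprime_one_right _⟩
  rw [h, Fintype.card_piFinset_const, Nat.card_Icc]
  norm_num

lemma phi_pow (t n : ℕ) (hp : p.Prime) (ht : 1 ≤ t) (hn : 1 ≤ n) :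
    phi n (p ^ t) = p ^ (t * n) - p ^ ((t - 1) * n) := by
  classical
  rw [phi]
  have htotal : (Fintype.piFinset fun _ : Fin n => Finset.Icc 1 (p ^ t)).card
      = p ^ (t * n) := by
    rw [Fintype.card_piFinset_const, Nat.card_Icc, pow_mul]
    norm_num
  have hneg : ((Fintype.piFinset fun _ : Fin n => Finset.Icc 1 (p ^ t)).filter
      fun a : Fin n → ℕ => ¬ ∃ i, Nat.Coprime (a i) (p ^ t)).card
      = p ^ ((t - 1) * n) := by
    have hiff : ∀ a : ℕ, (¬ Nat.Coprime a (p ^ t)) ↔ p ∣ a := by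
      intro a
      rw [Nat.coprime_pow_right_iff ht, Nat.coprime_comm,
        hp.coprime_iff_not_dvd, not_not]
    have hcongr : ((Fintype.piFinset fun _ : Fin n => Finset.Icc 1 (p ^ t)).filter
        fun a : Fin n → ℕ => ¬ ∃ i, Nat.Coprime (a i) (p ^ t))
        = (Fintype.piFinset fun _ : Fin n => Finset.Icc 1 (p ^ t)).filter
          fun a : Fin n → ℕ => ∀ i, p ∣ a i := by
      apply Finset.filter_congr
      intro a _
      push_neg
      simp only [hiff]
    rw [hcongr, piFilter _ (fun v : ℕ => p ∣ v)]
    have : (Finset.Icc 1 (p ^ t)).filter (fun v : ℕ => p ∣ v)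
        = (Finset.Ioc 0 (p ^ t)).filter (fun v : ℕ => p ∣ v) := by
      rw [← Finset.Icc_add_one_left_eq_Ioc, zero_add]
    rw [this, Nat.Ioc_filter_dvd_card_eq_div, pow_mul, ← Nat.pow_div ht hp.pos,
      pow_one]
  have hsum := Finset.card_filter_add_card_filter_not
    (s := Fintype.piFinset fun _ : Fin n => Finset.Icc 1 (p ^ t))
    (fun a : Fin n → ℕ => ∃ i, Nat.Coprime (a i) (p ^ t))
  rw [htotal, hneg] at hsum
  exact Nat.eq_sub_of_add_eq hsum

def matEquiv (n : ℕ) (R : Type*) : Matrix (Fin n) (Fin 1) R ≃ (Fin n → R) where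
  toFun A i := A i 0
  invFun a := fun i _ => a i
  left_inv A := by
    funext i j
    show A i 0 = A i j
    congr 1
    exact Subsingleton.elim _ _
  right_inv a := rfl

lemma E_eq_filter (n j : ℕ) [NeZero (p ^ s)] :
    E p s n 1 j = (Finset.univ.filter fun a : Fin n → ZMod (p ^ s) =>
      (Finset.univ.filter fun x : ZMod (p ^ s) => ∀ i, a i * x = 0).card
        = p ^ j).card := by
  classical
  have hinner : ∀ A : Matrix (Fin n) (Fin 1) (ZMod (p ^ s)),
      Nat.card {x : Fin 1 → ZMod (p ^ s) // A.mulVec x = 0}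
        = (Finset.univ.filter fun x : ZMod (p ^ s) => ∀ i, A i 0 * x = 0).card := by
    intro A
    have e : {x : Fin 1 → ZMod (p ^ s) // A.mulVec x = 0}
        ≃ {x : ZMod (p ^ s) // ∀ i, A i 0 * x = 0} :=
      (Equiv.funUnique (Fin 1) (ZMod (p ^ s))).subtypeEquiv (fun x => by
        simp [Matrix.mulVec, dotProduct, Fin.sum_univ_one, funext_iff,
          Fin.forall_fin_one])
    rw [Nat.card_congr e, Nat.card_eq_fintype_card, Fintype.card_subtype]
  rw [E]
  have h1 : Nat.card {A : Matrix (Fin n) (Fin 1) (ZMod (p ^ s)) //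
        Nat.card {x : Fin 1 → ZMod (p ^ s) // A.mulVec x = 0} = p ^ j}
      = Nat.card {A : Matrix (Fin n) (Fin 1) (ZMod (p ^ s)) //
        (Finset.univ.filter fun x : ZMod (p ^ s) => ∀ i, A i 0 * x = 0).card
          = p ^ j} :=
    Nat.card_congr (Equiv.subtypeEquivRight fun A => by rw [hinner])
  rw [h1]
  have h2 : {A : Matrix (Fin n) (Fin 1) (ZMod (p ^ s)) //
        (Finset.univ.filter fun x : ZMod (p ^ s) => ∀ i, A i 0 * x = 0).card = p ^ j}
      ≃ {a : Fin n → ZMod (p ^ s) //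
        (Finset.univ.filter fun x : ZMod (p ^ s) => ∀ i, a i * x = 0).card = p ^ j} :=
    (matEquiv n (ZMod (p ^ s))).subtypeEquiv fun A => Iff.rfl
  rw [Nat.card_congr h2, Nat.card_eq_fintype_card, Fintype.card_subtype]

theorem E_nx1 (p s n j : ℕ) (hp : p.Prime) (hs : 1 ≤ s) (hn : 1 ≤ n) :
    (j ≤ s → E p s n 1 j = phi n (p ^ (s - j))) ∧ (s < j → E p s n 1 j = 0) := by
  haveI : NeZero (p ^ s) := ⟨pow_ne_zero s hp.pos.ne'⟩
  classical
  constructor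
  · intro hj
    rw [E_eq_filter]
    rcases lt_or_eq_of_le hj with hlt | heq
    · have hsub : (Finset.univ.filter fun a : Fin n → ZMod (p ^ s) =>
            ∀ i, p ^ (j + 1) ∣ (a i).val)
          ⊆ Finset.univ.filter fun a : Fin n → ZMod (p ^ s) =>
            ∀ i, p ^ j ∣ (a i).val := by
        intro a ha
        simp only [mem_filter, mem_univ, true_and] at ha ⊢
        intro i
        exact dvd_trans (pow_dvd_pow p (Nat.le_succ j)) (ha i)
      rw [classify_lt n j hp hlt, Finset.card_sdiff_of_subset hsub, count_V n j hp hj,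
        count_V n (j + 1) hp hlt, phi_pow (s - j) n hp (by omega) hn]
      congr 2
    · subst heq
      rw [classify_eq n hp hs, count_V n j hp le_rfl, Nat.sub_self, Nat.zero_mul,
        pow_zero, phi_one n hn]
  · intro hj
    rw [E_eq_filter]
    rw [Finset.card_eq_zero, Finset.filter_eq_empty_iff]
    intro a _
    intro hcard
    have hle : (Finset.univ.filter fun x : ZMod (p ^ s) => ∀ i, a i * x = 0).card
        ≤ p ^ s := by
      calc _ ≤ (Finset.univ : Finset (ZMod (p ^ s))).card :=
            Finset.card_le_card (Finset.filter_subset _ _)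
      _ = p ^ s := by rw [Finset.card_univ, ZMod.card]
    rw [hcard] at hle
    exact absurd hle (not_le.mpr (Nat.pow_lt_pow_right hp.one_lt hj))
end

section
/- For n ≥ 2 and 1 ≤ j ≤ s-1, the number of n×2 matrices over Z_{p^s} with at least one entry invertible mod p whose homogeneous system has exactly p^j solutions equals φ_n(p^s)·φ_{n-1}(p^{s-j})·(p^s + p^{s-1}); for j = 0 it equals φ_n(p^s)·φ_{n-1}(p^s)·p^s; and it is 0 for j > s. -/
lemma card_val_dvd {N : ℕ} (hN : 0 < N) {k : ℕ} (hk : k ∣ N) (hk0 : 0 < k) :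
    Nat.card {y : ZMod N // k ∣ y.val} = N / k := by
  haveI : NeZero N := ⟨hN.ne'⟩
  have hNk : k * (N / k) = N := Nat.mul_div_cancel' hk
  have key : ∀ t : Fin (N / k), k * t.1 < N := fun t =>
    lt_of_lt_of_le ((mul_lt_mul_iff_right₀ hk0).mpr t.2) hNk.le
  have e : {y : ZMod N // k ∣ y.val} ≃ Fin (N / k) :=
  { toFun := fun y => ⟨y.1.val / k, by
      obtain ⟨t, ht⟩ := y.2
      have hv : y.1.val < N := ZMod.val_lt y.1
      rw [ht, Nat.mul_div_cancel_left _ hk0]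
      rw [ht] at hv
      have := hNk
      exact Nat.lt_of_mul_lt_mul_left (a := k) (by omega)⟩
    invFun := fun t => ⟨((k * t.1 : ℕ) : ZMod N), by
      rw [ZMod.val_cast_of_lt (key t)]
      exact dvd_mul_right k t.1⟩
    left_inv := fun y => by
      apply Subtype.ext
      simp only []
      rw [Nat.mul_div_cancel' y.2]
      exact ZMod.natCast_rightInverse y.1
    right_inv := fun t => by
      apply Fin.ext
      simp only []
      rw [ZMod.val_cast_of_lt (key t), Nat.mul_div_cancel_left _ hk0] }
  rw [Nat.card_congr e, Nat.card_eq_fintype_card, Fintype.card_fin]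

lemma dvd_mul_iff_div_gcd_dvd {N a b : ℕ} (hN : 0 < N) :
    N ∣ a * b ↔ N / Nat.gcd N b ∣ a := by
  set g := Nat.gcd N b with hgdef
  have hg : 0 < g := Nat.gcd_pos_of_pos_left b hN
  obtain ⟨N', hN'⟩ : g ∣ N := Nat.gcd_dvd_left N b
  obtain ⟨b', hb'⟩ : g ∣ b := Nat.gcd_dvd_right N b
  have hdiv : N / g = N' := by rw [hN', Nat.mul_div_cancel_left _ hg]
  have hcop : Nat.Coprime N' b' := by
    have h2 := Nat.coprime_div_gcd_div_gcd (m := N) (n := b) hg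
    rw [← hgdef, hdiv] at h2
    rwa [hb', Nat.mul_div_cancel_left _ hg] at h2
  rw [hdiv]
  constructor
  · intro h
    rw [hN', hb'] at h
    have h3 : g * N' ∣ g * (a * b') := by
      calc g * N' ∣ a * (g * b') := h
        _ = g * (a * b') := by ring
    exact hcop.dvd_of_dvd_mul_right ((Nat.mul_dvd_mul_iff_left hg).mp h3)
  · intro h
    obtain ⟨t, ht⟩ := h
    refine ⟨t * b', ?_⟩
    rw [ht, hb', hN']; ring

lemma zmod_mul_eq_zero_iff {N : ℕ} (hN : 0 < N) (y r : ZMod N) :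
    y * r = 0 ↔ N / Nat.gcd N r.val ∣ y.val := by
  haveI : NeZero N := ⟨hN.ne'⟩
  have h : y * r = ((y.val * r.val : ℕ) : ZMod N) := by
    rw [Nat.cast_mul, ZMod.natCast_rightInverse y, ZMod.natCast_rightInverse r]
  rw [h, ZMod.natCast_eq_zero_iff, dvd_mul_iff_div_gcd_dvd hN]

lemma annCard_eq {N : ℕ} (hN : 0 < N) {m : ℕ} (w : Fin m → ZMod N) (d : ℕ)
    (h1 : ∀ i, d ∣ Nat.gcd N (w i).val) (h2 : ∃ i, Nat.gcd N (w i).val = d) :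
    Nat.card {y : ZMod N // ∀ i, y * w i = 0} = d := by
  have hdN : d ∣ N := by obtain ⟨i, hi⟩ := h2; exact hi ▸ Nat.gcd_dvd_left N _
  have hd0 : 0 < d := by
    obtain ⟨i, hi⟩ := h2
    rw [← hi]; exact Nat.gcd_pos_of_pos_left _ hN
  have hiff : ∀ y : ZMod N, (∀ i, y * w i = 0) ↔ N / d ∣ y.val := by
    intro y
    constructor
    · intro h
      obtain ⟨i, hi⟩ := h2
      have := (zmod_mul_eq_zero_iff hN y (w i)).mp (h i)
      rwa [hi] at this
    · intro h i
      rw [zmod_mul_eq_zero_iff hN]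
      refine dvd_trans ?_ h
      -- N / gcd N (w i).val ∣ N / d  since d ∣ gcd ∣ N
      set G := Nat.gcd N (w i).val with hGdef
      obtain ⟨e, he⟩ := h1 i
      obtain ⟨f, hf⟩ : G ∣ N := Nat.gcd_dvd_left _ _
      refine ⟨e, ?_⟩
      have hG0 : 0 < G := Nat.gcd_pos_of_pos_left _ hN
      have h5 : N = d * (e * f) := by rw [hf, hGdef, he]; ring
      have hNd : N / d = e * f := by rw [h5, Nat.mul_div_cancel_left _ hd0]
      have hNG : N / G = f := by rw [hf, Nat.mul_div_cancel_left _ hG0]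
      rw [hNd, hNG]; ring
  rw [Nat.card_congr (Equiv.subtypeEquivRight hiff), card_val_dvd hN _ _,
    Nat.div_div_self hdN hN.ne']
  · exact Nat.div_dvd_of_dvd hdN
  · exact Nat.div_pos (Nat.le_of_dvd hN hdN) hd0

lemma exists_min_gcd {p s m : ℕ} (hp : p.Prime) (hm : 0 < m) (w : Fin m → ZMod (p ^ s)) :
    ∃ d, d ∣ p ^ s ∧ (∀ i, d ∣ Nat.gcd (p ^ s) (w i).val) ∧
      (∃ i, Nat.gcd (p ^ s) (w i).val = d) := by
  have hdvd : ∀ i, Nat.gcd (p ^ s) (w i).val ∣ p ^ s := fun i => Nat.gcd_dvd_left _ _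
  have hpow : ∀ i, ∃ k ≤ s, Nat.gcd (p ^ s) (w i).val = p ^ k := fun i =>
    (Nat.dvd_prime_pow hp).mp (hdvd i)
  choose k hk hkeq using hpow
  haveI : Nonempty (Fin m) := ⟨⟨0, hm⟩⟩
  obtain ⟨i0, -, hmin⟩ := Finset.exists_min_image Finset.univ k ⟨Classical.arbitrary _, Finset.mem_univ _⟩
  refine ⟨Nat.gcd (p ^ s) (w i0).val, hdvd i0, fun i => ?_, ⟨i0, rfl⟩⟩
  rw [hkeq i0, hkeq i]
  exact pow_dvd_pow p (hmin i (Finset.mem_univ i))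

section
variable {p s : ℕ} (hp : p.Prime) (hs : 1 ≤ s)

lemma isUnit_zmod_iff (hp : p.Prime) (hs : 1 ≤ s) (a : ZMod (p ^ s)) :
    IsUnit a ↔ ¬ p ∣ a.val := by
  haveI : NeZero (p ^ s) := ⟨(pow_pos hp.pos s).ne'⟩
  conv_lhs => rw [← ZMod.natCast_rightInverse a]
  rw [ZMod.isUnit_iff_coprime, Nat.coprime_pow_right_iff hs, Nat.coprime_comm]
  exact hp.coprime_iff_not_dvd

lemma not_isUnit_iff (hp : p.Prime) (hs : 1 ≤ s) (a : ZMod (p ^ s)) :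
    ¬ IsUnit a ↔ ∃ b, a = (p : ZMod (p ^ s)) * b := by
  haveI : NeZero (p ^ s) := ⟨(pow_pos hp.pos s).ne'⟩
  rw [isUnit_zmod_iff hp hs, not_not]
  constructor
  · rintro ⟨t, ht⟩
    refine ⟨((t : ℕ) : ZMod (p ^ s)), ?_⟩
    rw [← Nat.cast_mul, ← ht]
    exact (ZMod.natCast_rightInverse a).symm
  · rintro ⟨b, rfl⟩
    have : (p : ZMod (p ^ s)) * b = ((p * b.val : ℕ) : ZMod (p ^ s)) := by
      rw [Nat.cast_mul, ZMod.natCast_rightInverse b]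
    rw [this, ZMod.val_natCast]
    exact Nat.dvd_mod_iff (dvd_pow_self p (Nat.one_le_iff_ne_zero.mp hs)) |>.mpr (dvd_mul_right p b.val)

lemma nonprim_iff (hp : p.Prime) (hs : 1 ≤ s) {m : ℕ} (v : Fin m → ZMod (p ^ s)) :
    (∀ i, ¬ IsUnit (v i)) ↔ ∃ v', v = (p : ZMod (p ^ s)) • v' := by
  constructor
  · intro h
    have := fun i => (not_isUnit_iff hp hs (v i)).mp (h i)
    choose v' hv' using this
    exact ⟨v', funext fun i => hv' i⟩
  · rintro ⟨v', rfl⟩ i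
    rw [not_isUnit_iff hp hs]
    exact ⟨v' i, rfl⟩

lemma prim_map_linearEquiv (hp : p.Prime) (hs : 1 ≤ s) {m : ℕ}
    (T : (Fin m → ZMod (p ^ s)) ≃ₗ[ZMod (p ^ s)] (Fin m → ZMod (p ^ s)))
    (v : Fin m → ZMod (p ^ s)) :
    (∃ i, IsUnit (T v i)) ↔ ∃ i, IsUnit (v i) := by
  have key : ∀ (S : (Fin m → ZMod (p ^ s)) ≃ₗ[ZMod (p ^ s)] (Fin m → ZMod (p ^ s)))
      (u : Fin m → ZMod (p ^ s)), (∃ v', u = (p : ZMod (p ^ s)) • v') →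
      ∃ v', S u = (p : ZMod (p ^ s)) • v' := by
    rintro S u ⟨v', rfl⟩
    exact ⟨S v', by rw [map_smul]⟩
  constructor
  · intro h
    by_contra h'
    push_neg at h'
    obtain ⟨i, hi⟩ := h
    have := key T v ((nonprim_iff hp hs v).mp h')
    exact ((nonprim_iff hp hs (T v)).mpr this) i hi
  · intro h
    by_contra h'
    push_neg at h'
    obtain ⟨i, hi⟩ := h
    have := key T.symm (T v) ((nonprim_iff hp hs (T v)).mp h')
    rw [T.symm_apply_apply] at this
    exact ((nonprim_iff hp hs v).mpr this) i hi

lemma card_content_eq (hp : p.Prime) {m : ℕ} (hm : 0 < m) {j : ℕ} (hj : j < s) :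
    Nat.card {w : Fin m → ZMod (p ^ s) //
        Nat.card {y : ZMod (p ^ s) // ∀ i, y * w i = 0} = p ^ j}
      = Nat.card {u : Fin m → ZMod (p ^ (s - j)) // ∃ i, IsUnit (u i)} := by
  have hs : 1 ≤ s := by omega
  set N := p ^ s with hNdef
  set M := p ^ (s - j) with hMdef
  have hN : 0 < N := pow_pos hp.pos s
  have hM : 0 < M := pow_pos hp.pos (s - j)
  haveI : NeZero N := ⟨hN.ne'⟩
  haveI : NeZero M := ⟨hM.ne'⟩
  have hNM : p ^ j * M = N := by rw [hMdef, hNdef, ← pow_add]; congr 1; omega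
  have hpj : 0 < p ^ j := pow_pos hp.pos j
  -- key computations
  have val_to : ∀ (u : Fin m → ZMod M) (i : Fin m),
      (((p ^ j * (u i).val : ℕ) : ZMod N)).val = p ^ j * (u i).val := fun u i =>
    ZMod.val_cast_of_lt (lt_of_lt_of_le ((mul_lt_mul_iff_right₀ hpj).mpr (ZMod.val_lt (u i))) hNM.le)
  refine Nat.card_congr ?_
  refine
  { toFun := fun w => ⟨fun i => (((w.1 i).val / p ^ j : ℕ) : ZMod M), ?_⟩
    invFun := fun u => ⟨fun i => ((p ^ j * (u.1 i).val : ℕ) : ZMod N), ?_⟩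
    left_inv := ?_
    right_inv := ?_ }
  · -- primitivity of u from w's property
    obtain ⟨w, hw⟩ := w
    obtain ⟨d, hdN, h1, h2⟩ := exists_min_gcd hp hm w
    have hcard := annCard_eq hN w d h1 h2
    rw [hw] at hcard
    subst hcard
    obtain ⟨i, hi⟩ := h2
    refine ⟨i, ?_⟩
    rw [ZMod.isUnit_iff_coprime]
    have hdvd : p ^ j ∣ (w i).val := hi ▸ Nat.gcd_dvd_right N (w i).val
    obtain ⟨t, ht⟩ := hdvd
    rw [ht, Nat.mul_div_cancel_left _ hpj]
    have : Nat.gcd N (w i).val = p ^ j * Nat.gcd M t := by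
      rw [ht, ← hNM, Nat.gcd_mul_left]
    rw [this] at hi
    have : Nat.gcd M t = 1 :=
      Nat.eq_of_mul_eq_mul_left hpj (by rw [hi, mul_one])
    rw [Nat.coprime_comm]
    exact this
  · -- annCard of image = p ^ j
    obtain ⟨u, hu⟩ := u
    apply annCard_eq hN _ (p ^ j)
    · intro i
      rw [val_to u i, ← hNM, Nat.gcd_mul_left]
      exact dvd_mul_right _ _
    · obtain ⟨i, hi⟩ := hu
      refine ⟨i, ?_⟩
      rw [val_to u i, ← hNM, Nat.gcd_mul_left]
      have : Nat.Coprime (u i).val M := by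
        rw [← ZMod.isUnit_iff_coprime, ZMod.natCast_rightInverse (u i)]
        exact hi
      rw [Nat.coprime_comm] at this
      rw [Nat.Coprime] at this
      rw [this, mul_one]
  · -- left inverse (w side)
    rintro ⟨w, hw⟩
    apply Subtype.ext
    funext i
    simp only []
    -- p ^ j ∣ (w i).val
    obtain ⟨d, hdN, h1, h2⟩ := exists_min_gcd hp hm w
    have hcard := annCard_eq hN w d h1 h2
    rw [hw] at hcard
    subst hcard
    obtain ⟨t, ht⟩ : p ^ j ∣ (w i).val :=
      dvd_trans (h1 i) (Nat.gcd_dvd_right N (w i).val)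
    rw [ht, Nat.mul_div_cancel_left _ hpj]
    have hval : ((t : ℕ) : ZMod M).val = t % M := ZMod.val_natCast M t
    rw [hval]
    have : ((p ^ j * (t % M) : ℕ) : ZMod N) = ((p ^ j * t : ℕ) : ZMod N) := by
      rw [ZMod.natCast_eq_natCast_iff, ← hNM]
      exact Nat.ModEq.mul_left' (p ^ j) (Nat.mod_modEq t M)
    rw [this, ← ht]
    exact ZMod.natCast_rightInverse (w i)
  · -- right inverse (u side)
    rintro ⟨u, hu⟩
    apply Subtype.ext
    funext i
    simp only []
    rw [val_to u i, Nat.mul_div_cancel_left _ hpj]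
    exact ZMod.natCast_rightInverse (u i)

end

lemma phi_eq {k c : ℕ} (hc : 0 < c) :
    phi k c = Nat.card {v : Fin k → ZMod c // ∃ i, IsUnit (v i)} := by
  haveI : NeZero c := ⟨hc.ne'⟩
  classical
  rw [Nat.card_eq_fintype_card, Fintype.card_subtype]
  unfold phi
  apply Finset.card_bij' (fun a _ => fun k => ((a k : ℕ) : ZMod c))
    (fun v _ => fun k => if (v k).val = 0 then c else (v k).val)
  · intro a ha
    rw [Finset.mem_filter] at ha ⊢
    obtain ⟨-, i, hi⟩ := ha
    exact ⟨Finset.mem_univ _, i, (ZMod.isUnit_iff_coprime _ _).mpr hi⟩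
  · intro v hv
    rw [Finset.mem_filter] at hv ⊢
    obtain ⟨-, i, hi⟩ := hv
    constructor
    · rw [Fintype.mem_piFinset]
      intro k
      rw [Finset.mem_Icc]
      by_cases h : (v k).val = 0 <;> simp only [h, if_true, if_false]
      · omega
      · exact ⟨by omega, le_of_lt (ZMod.val_lt (v k))⟩
    · refine ⟨i, ?_⟩
      have hcop : Nat.Coprime (v i).val c := by
        rw [← ZMod.isUnit_iff_coprime, ZMod.natCast_rightInverse (v i)]
        exact hi
      by_cases h : (v i).val = 0 <;> simp only [h, if_true, if_false]
      · rw [Nat.Coprime] at hcop ⊢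
        simp only [h, Nat.gcd_zero_left] at hcop
        simp [hcop]
      · exact hcop
  · intro a ha
    rw [Finset.mem_filter, Fintype.mem_piFinset] at ha
    funext k
    have hk := ha.1 k
    rw [Finset.mem_Icc] at hk
    rw [ZMod.val_natCast]
    by_cases h : a k = c
    · simp [h, Nat.mod_self]
    · have hlt : a k < c := by omega
      rw [Nat.mod_eq_of_lt hlt]
      have : a k ≠ 0 := by omega
      simp [this]
  · intro v hv
    funext k
    by_cases h : (v k).val = 0 <;> simp only [h, if_true, if_false]
    · rw [ZMod.natCast_self]
      exact ((ZMod.val_eq_zero (v k)).mp h).symm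
    · exact ZMod.natCast_rightInverse (v k)

lemma card_nonunit {p s : ℕ} (hp : p.Prime) (hs : 1 ≤ s) :
    Nat.card {a : ZMod (p ^ s) // ¬ IsUnit a} = p ^ (s - 1) := by
  have hN : 0 < p ^ s := pow_pos hp.pos s
  have h1 : ∀ a : ZMod (p ^ s), (¬ IsUnit a) ↔ p ∣ a.val := by
    intro a; rw [isUnit_zmod_iff hp hs, not_not]
  rw [Nat.card_congr (Equiv.subtypeEquivRight h1),
    card_val_dvd hN (dvd_pow_self p (by omega : s ≠ 0)) hp.pos]
  rw [← pow_sub_one_mul (by omega : s ≠ 0) p, Nat.mul_div_cancel _ hp.pos]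

noncomputable def Kc {N n : ℕ} (c1 c2 : Fin n → ZMod N) : ℕ :=
  Nat.card {x : ZMod N × ZMod N // x.1 • c1 + x.2 • c2 = 0}

section structural
variable {N n : ℕ}

lemma etilde_eq_pairs (p s j : ℕ) (n : ℕ) :
    Etilde p s n 2 j = Nat.card {c : (Fin n → ZMod (p ^ s)) × (Fin n → ZMod (p ^ s)) //
      Kc c.1 c.2 = p ^ j ∧ ((∃ i, IsUnit (c.1 i)) ∨ (∃ i, IsUnit (c.2 i)))} := by
  apply Nat.card_congr
  refine Equiv.subtypeEquiv
    (⟨fun A => (fun k => A k 0, fun k => A k 1),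
      fun c => Matrix.of fun k => ![c.1 k, c.2 k],
      fun A => by funext k l; fin_cases l <;> rfl,
      fun c => by ext k <;> rfl⟩ :
      Matrix (Fin n) (Fin 2) (ZMod (p ^ s)) ≃ (Fin n → ZMod (p ^ s)) × (Fin n → ZMod (p ^ s)))
    (fun A => ?_)
  have hker : ∀ x : Fin 2 → ZMod (p ^ s),
      A.mulVec x = x 0 • (fun k => A k 0) + x 1 • (fun k => A k 1) := by
    intro x; funext k
    simp [Matrix.mulVec, dotProduct, Fin.sum_univ_two, mul_comm]
  have h1 : Nat.card {x : Fin 2 → ZMod (p ^ s) // A.mulVec x = 0}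
      = Kc (fun k => A k 0) (fun k => A k 1) := by
    apply Nat.card_congr
    refine Equiv.subtypeEquiv (finTwoArrowEquiv _) (fun x => ?_)
    rw [hker]
    rfl
  have h2 : (∃ k l, IsUnit (A k l)) ↔
      ((∃ i, IsUnit (A i 0)) ∨ (∃ i, IsUnit (A i 1))) := by
    constructor
    · rintro ⟨k, l, h⟩
      fin_cases l
      · exact Or.inl ⟨k, h⟩
      · exact Or.inr ⟨k, h⟩
    · rintro (⟨k, h⟩ | ⟨k, h⟩)
      exacts [⟨k, 0, h⟩, ⟨k, 1, h⟩]
  rw [h1, h2]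
  rfl

lemma Kc_swap (c1 c2 : Fin n → ZMod N) : Kc c1 c2 = Kc c2 c1 := by
  apply Nat.card_congr
  exact Equiv.subtypeEquiv (Equiv.prodComm _ _) (fun x => by
    simp only [Equiv.prodComm_apply, Prod.fst_swap, Prod.snd_swap]
    rw [add_comm])

lemma Kc_linear (T : (Fin n → ZMod N) ≃ₗ[ZMod N] (Fin n → ZMod N))
    (c1 c2 : Fin n → ZMod N) : Kc (T c1) (T c2) = Kc c1 c2 := by
  apply Nat.card_congr
  apply Equiv.subtypeEquivRight
  intro x
  have : x.1 • T c1 + x.2 • T c2 = T (x.1 • c1 + x.2 • c2) := by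
    rw [map_add, map_smul, map_smul]
  rw [this, LinearEquiv.map_eq_zero_iff]

lemma Kc_cons {m : ℕ} (c2 : Fin (m + 1) → ZMod N) :
    Kc (Fin.cons 1 0) c2 = Nat.card {y : ZMod N // ∀ i, y * Fin.tail c2 i = 0} := by
  have hcond : ∀ x : ZMod N × ZMod N,
      (x.1 • (Fin.cons 1 0 : Fin (m+1) → ZMod N) + x.2 • c2 = 0)
        ↔ (x.1 + x.2 * c2 0 = 0 ∧ ∀ i, x.2 * Fin.tail c2 i = 0) := by
    intro x
    rw [funext_iff, Fin.forall_fin_succ]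
    constructor
    · rintro ⟨h0, hs⟩
      refine ⟨?_, fun i => ?_⟩
      · simpa using h0
      · simpa [Fin.tail] using hs i
    · rintro ⟨h0, hs⟩
      refine ⟨by simpa using h0, fun i => by simpa [Fin.tail] using hs i⟩
  apply Nat.card_congr
  refine ⟨fun x => ⟨x.1.2, ((hcond x.1).mp x.2).2⟩,
    fun y => ⟨(-(y.1 * c2 0), y.1), (hcond _).mpr ⟨by ring, y.2⟩⟩,
    fun x => ?_, fun y => rfl⟩
  apply Subtype.ext
  have := ((hcond x.1).mp x.2).1
  have h1 : x.1.1 = -(x.1.2 * c2 0) := by linear_combination this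
  exact Prod.ext h1.symm rfl

lemma exists_T {p s : ℕ} {k : ℕ} (c : Fin (k + 1) → ZMod (p ^ s))
    (hc : ∃ i, IsUnit (c i)) :
    ∃ T : (Fin (k + 1) → ZMod (p ^ s)) ≃ₗ[ZMod (p ^ s)] (Fin (k + 1) → ZMod (p ^ s)),
      T c = Fin.cons 1 0 := by
  classical
  obtain ⟨i0, hi0⟩ := hc
  set σ := Equiv.swap (0 : Fin (k + 1)) i0 with hσ
  set c' := c ∘ σ with hc'
  have hc'0 : c' 0 = c i0 := by rw [hc']; simp [hσ, Equiv.swap_apply_left]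
  obtain ⟨u, hu⟩ := hi0
  have hc'u : c' 0 = ↑u := by rw [hc'0, hu]
  set f : (Fin (k+1) → ZMod (p ^ s)) →ₗ[ZMod (p ^ s)] (Fin (k+1) → ZMod (p ^ s)) :=
  { toFun := fun x => fun j => if j = 0 then (↑u⁻¹ * x 0) else x j - c' j * (↑u⁻¹ * x 0)
    map_add' := by intro x y; funext j; by_cases h : j = 0 <;> simp [h] <;> ring
    map_smul' := by intro a x; funext j; by_cases h : j = 0 <;> simp [h] <;> ring } with hf
  set g : (Fin (k+1) → ZMod (p ^ s)) →ₗ[ZMod (p ^ s)] (Fin (k+1) → ZMod (p ^ s)) :=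
  { toFun := fun y => fun j => if j = 0 then (↑u * y 0) else y j + c' j * y 0
    map_add' := by intro x y; funext j; by_cases h : j = 0 <;> simp [h] <;> ring
    map_smul' := by intro a x; funext j; by_cases h : j = 0 <;> simp [h] <;> ring } with hg
  have hfg : f.comp g = LinearMap.id := by
    apply LinearMap.ext; intro y; funext j
    by_cases h : j = 0 <;>
      simp [hf, hg, h, Units.inv_mul_cancel_left, Units.mul_inv_cancel_left] <;> ring
  have hgf : g.comp f = LinearMap.id := by
    apply LinearMap.ext; intro x; funext j
    by_cases h : j = 0 <;>
      simp [hf, hg, h, Units.inv_mul_cancel_left, Units.mul_inv_cancel_left] <;> ring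
  refine ⟨(LinearEquiv.funCongrLeft (ZMod (p ^ s)) (ZMod (p ^ s)) σ).trans
    ((LinearEquiv.ofLinear (re₁₂ := RingHomInvPair.ids) (re₂₁ := RingHomInvPair.ids) f g hfg hgf)), ?_⟩
  have key : ((LinearEquiv.ofLinear (re₁₂ := RingHomInvPair.ids) (re₂₁ := RingHomInvPair.ids) f g hfg hgf)) c' = Fin.cons 1 0 := by
    funext j
    have hTapp : ((LinearEquiv.ofLinear (re₁₂ := RingHomInvPair.ids) (re₂₁ := RingHomInvPair.ids) f g hfg hgf)) c' j
        = if j = 0 then (↑u⁻¹ * c' 0) else c' j - c' j * (↑u⁻¹ * c' 0) := rfl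
    rw [hTapp]
    refine Fin.cases ?_ (fun i => ?_) j
    · simp [hc'u]
    · simp [Fin.succ_ne_zero, hc'u]
  rw [LinearEquiv.trans_apply]
  have hPc : (LinearEquiv.funCongrLeft (ZMod (p ^ s)) (ZMod (p ^ s)) σ) c = c' := rfl
  rw [hPc, key]
end structural

lemma exists_T' {p s : ℕ} {m : ℕ} (c : Fin (m + 2) → ZMod (p ^ s))
    (hc : ∃ i, IsUnit (c i)) :
    ∃ T : (Fin (m + 2) → ZMod (p ^ s)) ≃ₗ[ZMod (p ^ s)] (Fin (m + 2) → ZMod (p ^ s)),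
      T c = Fin.cons 1 0 := exists_T c hc

-- new helpers
def prodSubtypeFstEquivSigma {A B : Type*} (P : A → Prop) (Q : A → B → Prop) :
    {c : A × B // P c.1 ∧ Q c.1 c.2} ≃ Σ a : Subtype P, {b : B // Q a.1 b} :=
  ⟨fun c => ⟨⟨c.1.1, c.2.1⟩, ⟨c.1.2, c.2.2⟩⟩, fun x => ⟨(x.1.1, x.2.1), x.1.2, x.2.2⟩,
   fun c => rfl, fun x => rfl⟩

def prodSubtypeSndEquivSigma {A B : Type*} (P : B → Prop) (Q : A → B → Prop) :
    {c : A × B // P c.2 ∧ Q c.1 c.2} ≃ Σ b : Subtype P, {a : A // Q a b.1} :=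
  ⟨fun c => ⟨⟨c.1.2, c.2.1⟩, ⟨c.1.1, c.2.2⟩⟩, fun x => ⟨(x.2.1, x.1.1), x.1.2, x.2.2⟩,
   fun c => rfl, fun x => rfl⟩

def prodSubtypeSnd {A B : Type*} (Q : B → Prop) :
    {x : A × B // Q x.2} ≃ A × {b // Q b} :=
  ⟨fun x => (x.1.1, ⟨x.1.2, x.2⟩), fun y => ⟨(y.1, y.2.1), y.2.2⟩,
   fun x => rfl, fun y => rfl⟩

noncomputable def orSplit {α : Type*} (P Q : α → Prop) :
    {x // P x ∨ Q x} ≃ {x // P x} ⊕ {x // ¬ P x ∧ Q x} := by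
  classical
  exact
  { toFun := fun x => if h : P x.1 then Sum.inl ⟨x.1, h⟩ else Sum.inr ⟨x.1, h, x.2.resolve_left h⟩
    invFun := Sum.elim (fun a => ⟨a.1, Or.inl a.2⟩) (fun b => ⟨b.1, Or.inr b.2.2⟩)
    left_inv := fun x => by by_cases h : P x.1 <;> simp [h]
    right_inv := fun x => by
      rcases x with ⟨a, ha⟩ | ⟨b, hb⟩
      · simp [ha]
      · simp [hb.1] }

lemma prim_cons {N k : ℕ} (β : ZMod N) (w : Fin k → ZMod N) :
    (∃ i, IsUnit ((Fin.cons β w : Fin (k + 1) → ZMod N) i)) ↔ IsUnit β ∨ ∃ i, IsUnit (w i) := by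
  constructor
  · rintro ⟨i, hi⟩
    rcases Fin.eq_zero_or_eq_succ i with rfl | ⟨i', rfl⟩
    · left; rwa [Fin.cons_zero] at hi
    · right; exact ⟨i', by rwa [Fin.cons_succ] at hi⟩
  · rintro (h | ⟨i, hi⟩)
    · exact ⟨0, by rwa [Fin.cons_zero]⟩
    · exact ⟨i.succ, by rwa [Fin.cons_succ]⟩

lemma annCard_unit {N m : ℕ} (w : Fin m → ZMod N) (h : ∃ i, IsUnit (w i)) :
    Nat.card {y : ZMod N // ∀ i, y * w i = 0} = 1 := by
  rw [Nat.card_eq_one_iff_unique]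
  obtain ⟨i, u, hu⟩ := h
  refine ⟨⟨fun y y' => ?_⟩, ⟨0, fun i => zero_mul _⟩⟩
  have hz : ∀ z : {y : ZMod N // ∀ i, y * w i = 0}, z.1 = 0 := by
    intro z
    have := z.2 i
    rw [← hu] at this
    exact (Units.mul_left_eq_zero u).mp this
  apply Subtype.ext
  rw [hz y, hz y']

lemma annCard_ne_one_of_nonprim {p s : ℕ} (hp : p.Prime) (hs : 1 ≤ s) {m : ℕ}
    (w : Fin m → ZMod (p ^ s)) (h : ¬ ∃ i, IsUnit (w i)) :
    Nat.card {y : ZMod (p ^ s) // ∀ i, y * w i = 0} ≠ 1 := by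
  haveI : NeZero (p ^ s) := ⟨(pow_pos hp.pos s).ne'⟩
  push_neg at h
  obtain ⟨w', rfl⟩ := (nonprim_iff hp hs w).mp h
  have hy : ∀ i, ((p ^ (s-1) : ℕ) : ZMod (p ^ s)) * ((p : ZMod (p ^ s)) • w') i = 0 := by
    intro i
    have h1 : ((p ^ (s-1) : ℕ) : ZMod (p ^ s)) * ((p : ZMod (p ^ s)) • w') i
        = ((p ^ (s-1) * p : ℕ) : ZMod (p ^ s)) * w' i := by
      push_cast
      simp [Pi.smul_apply, smul_eq_mul]
      ring
    rw [h1]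
    have h2 : (p ^ (s-1) * p : ℕ) = p ^ s := by
      rw [← pow_succ]
      congr 1
      omega
    rw [h2, ZMod.natCast_self, zero_mul]
  have hne : ((p ^ (s-1) : ℕ) : ZMod (p ^ s)) ≠ 0 := by
    rw [Ne, ZMod.natCast_eq_zero_iff]
    rw [Nat.pow_dvd_pow_iff_le_right hp.one_lt]
    omega
  intro hcard
  rw [Nat.card_eq_one_iff_unique] at hcard
  have := (@Subsingleton.elim _ hcard.1
    (⟨((p ^ (s-1) : ℕ) : ZMod (p ^ s)), hy⟩ : {y : ZMod (p ^ s) // ∀ i, y * ((p : ZMod (p ^ s)) • w') i = 0})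
    ⟨0, fun i => zero_mul _⟩)
  exact hne (congrArg Subtype.val this)

lemma annCard_dvd {p s : ℕ} (hp : p.Prime) {m : ℕ} (hm : 0 < m) (w : Fin m → ZMod (p ^ s)) :
    Nat.card {y : ZMod (p ^ s) // ∀ i, y * w i = 0} ∣ p ^ s := by
  obtain ⟨d, hdN, h1, h2⟩ := exists_min_gcd hp hm w
  rw [annCard_eq (pow_pos hp.pos s) w d h1 h2]
  exact hdN

lemma prim_of_K_one {p s : ℕ} (hp : p.Prime) (hs : 1 ≤ s) {m : ℕ}
    (c1 c2 : Fin (m + 1) → ZMod (p ^ s)) (h2 : ∃ i, IsUnit (c2 i)) (hK : Kc c1 c2 = 1) :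
    ∃ i, IsUnit (c1 i) := by
  obtain ⟨T, hT⟩ := exists_T c2 h2
  have hK2 : Kc (T c1) (Fin.cons 1 0) = 1 := by
    rw [← hT, Kc_linear, hK]
  rw [Kc_swap, Kc_cons] at hK2
  have hprim_tail : ∃ i, IsUnit (Fin.tail (T c1) i) := by
    by_contra h
    exact annCard_ne_one_of_nonprim hp hs _ h hK2
  have : ∃ i, IsUnit (T c1 i) := by
    obtain ⟨i, hi⟩ := hprim_tail
    exact ⟨i.succ, hi⟩
  exact (prim_map_linearEquiv hp hs T c1).mp this

lemma K_dvd {p s : ℕ} (hp : p.Prime) (hs : 1 ≤ s) {m : ℕ}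
    (c1 c2 : Fin (m + 2) → ZMod (p ^ s))
    (h : (∃ i, IsUnit (c1 i)) ∨ (∃ i, IsUnit (c2 i))) : Kc c1 c2 ∣ p ^ s := by
  rcases h with h | h
  · obtain ⟨T, hT⟩ := exists_T' c1 h
    rw [← Kc_linear T c1 c2, hT, Kc_cons]
    exact annCard_dvd hp (Nat.succ_pos _) _
  · obtain ⟨T, hT⟩ := exists_T' c2 h
    rw [Kc_swap, ← Kc_linear T c2 c1, hT, Kc_cons]
    exact annCard_dvd hp (Nat.succ_pos _) _

lemma cardKe0 {p s : ℕ} (hp : p.Prime) (hs : 1 ≤ s) {m j : ℕ} (hjs : j < s) :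
    Nat.card {b : Fin (m + 2) → ZMod (p ^ s) // Kc (Fin.cons 1 0) b = p ^ j}
      = p ^ s * phi (m + 1) (p ^ (s - j)) := by
  haveI : NeZero (p ^ s) := ⟨(pow_pos hp.pos s).ne'⟩
  calc Nat.card {b : Fin (m + 2) → ZMod (p ^ s) // Kc (Fin.cons 1 0) b = p ^ j}
      = Nat.card {b : Fin (m + 2) → ZMod (p ^ s) //
          Nat.card {y : ZMod (p ^ s) // ∀ i, y * Fin.tail b i = 0} = p ^ j} :=
        Nat.card_congr (Equiv.subtypeEquivRight fun b => by rw [Kc_cons])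
    _ = Nat.card {x : ZMod (p ^ s) × (Fin (m + 1) → ZMod (p ^ s)) //
          Nat.card {y : ZMod (p ^ s) // ∀ i, y * x.2 i = 0} = p ^ j} :=
        (Nat.card_congr (Equiv.subtypeEquiv (Fin.consEquiv fun _ => ZMod (p ^ s))
          (fun x => by
            have he : (Fin.consEquiv fun _ => ZMod (p ^ s)) x = Fin.cons x.1 x.2 := rfl
            rw [he, Fin.tail_cons]))).symm
    _ = Nat.card (ZMod (p ^ s) × {w : Fin (m + 1) → ZMod (p ^ s) //
          Nat.card {y : ZMod (p ^ s) // ∀ i, y * w i = 0} = p ^ j}) :=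
        Nat.card_congr (prodSubtypeSnd (A := ZMod (p ^ s))
          (Q := fun w : Fin (m + 1) → ZMod (p ^ s) =>
            Nat.card {y : ZMod (p ^ s) // ∀ i, y * w i = 0} = p ^ j))
    _ = p ^ s * phi (m + 1) (p ^ (s - j)) := by
        rw [Nat.card_prod, Nat.card_zmod, card_content_eq hp (Nat.succ_pos _) hjs,
          ← phi_eq (pow_pos hp.pos (s - j))]

lemma cardA_eq {p s : ℕ} (hp : p.Prime) (hs : 1 ≤ s) {m j : ℕ} (hjs : j < s) :
    Nat.card {c : (Fin (m + 2) → ZMod (p ^ s)) × (Fin (m + 2) → ZMod (p ^ s)) //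
        (∃ i, IsUnit (c.1 i)) ∧ Kc c.1 c.2 = p ^ j}
      = phi (m + 2) (p ^ s) * (p ^ s * phi (m + 1) (p ^ (s - j))) := by
  haveI : NeZero (p ^ s) := ⟨(pow_pos hp.pos s).ne'⟩
  calc Nat.card {c : (Fin (m + 2) → ZMod (p ^ s)) × (Fin (m + 2) → ZMod (p ^ s)) //
        (∃ i, IsUnit (c.1 i)) ∧ Kc c.1 c.2 = p ^ j}
      = Nat.card (Σ a : {a : Fin (m + 2) → ZMod (p ^ s) // ∃ i, IsUnit (a i)},
          {b : Fin (m + 2) → ZMod (p ^ s) // Kc a.1 b = p ^ j}) :=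
        Nat.card_congr (prodSubtypeFstEquivSigma
          (fun a : Fin (m + 2) → ZMod (p ^ s) => ∃ i, IsUnit (a i))
          (fun a b => Kc a b = p ^ j))
    _ = Nat.card (Σ _ : {a : Fin (m + 2) → ZMod (p ^ s) // ∃ i, IsUnit (a i)},
          {b : Fin (m + 2) → ZMod (p ^ s) // Kc (Fin.cons 1 0) b = p ^ j}) := by
        apply Nat.card_congr
        apply Equiv.sigmaCongrRight
        intro a
        have key : ∀ (T : (Fin (m + 2) → ZMod (p ^ s)) ≃ₗ[ZMod (p ^ s)]
            (Fin (m + 2) → ZMod (p ^ s))), T a.1 = Fin.cons 1 0 →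
            ∀ b, (Kc a.1 b = p ^ j ↔ Kc (Fin.cons 1 0) (T b) = p ^ j) := by
          intro T hT b
          rw [← hT, Kc_linear]
        refine Equiv.subtypeEquiv (exists_T' a.1 a.2).choose.toEquiv (fun b => ?_)
        rw [LinearEquiv.coe_toEquiv]
        exact key _ (exists_T' a.1 a.2).choose_spec b
    _ = Nat.card ({a : Fin (m + 2) → ZMod (p ^ s) // ∃ i, IsUnit (a i)} ×
          {b : Fin (m + 2) → ZMod (p ^ s) // Kc (Fin.cons 1 0) b = p ^ j}) :=
        Nat.card_congr (Equiv.sigmaEquivProd _ _)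
    _ = phi (m + 2) (p ^ s) * (p ^ s * phi (m + 1) (p ^ (s - j))) := by
        rw [Nat.card_prod, ← phi_eq (pow_pos hp.pos s), cardKe0 hp hs hjs]

lemma cardB_eq {p s : ℕ} (hp : p.Prime) (hs : 1 ≤ s) {m j : ℕ} (hj1 : 1 ≤ j) (hjs : j < s) :
    Nat.card {c : (Fin (m + 2) → ZMod (p ^ s)) × (Fin (m + 2) → ZMod (p ^ s)) //
        (∃ i, IsUnit (c.2 i)) ∧ (¬ (∃ i, IsUnit (c.1 i)) ∧ Kc c.1 c.2 = p ^ j)}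
      = phi (m + 2) (p ^ s) * (p ^ (s - 1) * phi (m + 1) (p ^ (s - j))) := by
  haveI : NeZero (p ^ s) := ⟨(pow_pos hp.pos s).ne'⟩
  have hpj : (1 : ℕ) < p ^ j := Nat.one_lt_pow (by omega) hp.one_lt
  have fiber : ∀ b : {b : Fin (m + 2) → ZMod (p ^ s) // ∃ i, IsUnit (b i)},
      Nat.card {a : Fin (m + 2) → ZMod (p ^ s) //
          ¬ (∃ i, IsUnit (a i)) ∧ Kc a b.1 = p ^ j}
        = p ^ (s - 1) * phi (m + 1) (p ^ (s - j)) := by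
    rintro ⟨b, hb⟩
    obtain ⟨T, hT⟩ := exists_T' b hb
    calc Nat.card {a : Fin (m + 2) → ZMod (p ^ s) //
            ¬ (∃ i, IsUnit (a i)) ∧ Kc a b = p ^ j}
        = Nat.card {a' : Fin (m + 2) → ZMod (p ^ s) //
            ¬ (∃ i, IsUnit (a' i)) ∧ Kc a' (Fin.cons 1 0) = p ^ j} := by
          apply Nat.card_congr
          refine Equiv.subtypeEquiv T.toEquiv (fun a => ?_)
          rw [LinearEquiv.coe_toEquiv, prim_map_linearEquiv hp hs T a, ← hT,
            Kc_linear T a b]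
      _ = Nat.card {x : ZMod (p ^ s) × (Fin (m + 1) → ZMod (p ^ s)) //
            ¬ IsUnit x.1 ∧
              Nat.card {y : ZMod (p ^ s) // ∀ i, y * x.2 i = 0} = p ^ j} := by
          refine (Nat.card_congr (Equiv.subtypeEquiv (Fin.consEquiv fun _ => ZMod (p ^ s))
            (fun x => ?_))).symm
          have he : (Fin.consEquiv fun _ => ZMod (p ^ s)) x = Fin.cons x.1 x.2 := rfl
          rw [he, Kc_swap, Kc_cons, Fin.tail_cons, prim_cons]
          constructor
          · rintro ⟨hx1, hx2⟩
            refine ⟨?_, hx2⟩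
            rintro (h | h)
            · exact hx1 h
            · rw [annCard_unit x.2 h] at hx2
              omega
          · rintro ⟨hx1, hx2⟩
            exact ⟨fun h => hx1 (Or.inl h), hx2⟩
      _ = p ^ (s - 1) * phi (m + 1) (p ^ (s - j)) := by
          rw [Nat.card_congr (Equiv.subtypeProdEquivProd
            (p := fun a : ZMod (p ^ s) => ¬ IsUnit a)
            (q := fun w : Fin (m + 1) → ZMod (p ^ s) =>
              Nat.card {y : ZMod (p ^ s) // ∀ i, y * w i = 0} = p ^ j)),
            Nat.card_prod, card_nonunit hp hs,
            card_content_eq hp (Nat.succ_pos _) hjs, ← phi_eq (pow_pos hp.pos (s - j))]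
  calc Nat.card {c : (Fin (m + 2) → ZMod (p ^ s)) × (Fin (m + 2) → ZMod (p ^ s)) //
        (∃ i, IsUnit (c.2 i)) ∧ (¬ (∃ i, IsUnit (c.1 i)) ∧ Kc c.1 c.2 = p ^ j)}
      = Nat.card (Σ b : {b : Fin (m + 2) → ZMod (p ^ s) // ∃ i, IsUnit (b i)},
          {a : Fin (m + 2) → ZMod (p ^ s) // ¬ (∃ i, IsUnit (a i)) ∧ Kc a b.1 = p ^ j}) :=
        Nat.card_congr (prodSubtypeSndEquivSigma
          (fun b : Fin (m + 2) → ZMod (p ^ s) => ∃ i, IsUnit (b i))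
          (fun a b => ¬ (∃ i, IsUnit (a i)) ∧ Kc a b = p ^ j))
    _ = Nat.card (Σ _ : {b : Fin (m + 2) → ZMod (p ^ s) // ∃ i, IsUnit (b i)},
          Fin (p ^ (s - 1) * phi (m + 1) (p ^ (s - j)))) :=
        Nat.card_congr (Equiv.sigmaCongrRight (fun b => Finite.equivFinOfCardEq (fiber b)))
    _ = phi (m + 2) (p ^ s) * (p ^ (s - 1) * phi (m + 1) (p ^ (s - j))) := by
        rw [Nat.card_congr (Equiv.sigmaEquivProd _ _), Nat.card_prod,
          ← phi_eq (pow_pos hp.pos s), Nat.card_eq_fintype_card, Fintype.card_fin]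

theorem Etilde_nx2 (p s n : ℕ) (hp : p.Prime) (hs : 1 ≤ s) (hn : 2 ≤ n) :
    Etilde p s n 2 0 = phi n (p ^ s) * phi (n - 1) (p ^ s) * p ^ s ∧
    (∀ j, 1 ≤ j → j ≤ s - 1 →
      Etilde p s n 2 j = phi n (p ^ s) * phi (n - 1) (p ^ (s - j)) * (p ^ s + p ^ (s - 1))) ∧
    (∀ j, s < j → Etilde p s n 2 j = 0) := by
  obtain ⟨m, rfl⟩ : ∃ m, n = m + 2 := ⟨n - 2, by omega⟩
  haveI : NeZero (p ^ s) := ⟨(pow_pos hp.pos s).ne'⟩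
  have hm21 : m + 2 - 1 = m + 1 := rfl
  refine ⟨?_, ?_, ?_⟩
  · -- j = 0
    rw [etilde_eq_pairs]
    have hiff : ∀ c : (Fin (m+2) → ZMod (p^s)) × (Fin (m+2) → ZMod (p^s)),
        (Kc c.1 c.2 = p ^ 0 ∧ ((∃ i, IsUnit (c.1 i)) ∨ (∃ i, IsUnit (c.2 i))))
          ↔ ((∃ i, IsUnit (c.1 i)) ∧ Kc c.1 c.2 = p ^ 0) := by
      intro c
      constructor
      · rintro ⟨hK, h | h⟩
        · exact ⟨h, hK⟩
        · exact ⟨prim_of_K_one hp hs c.1 c.2 h (by rwa [pow_zero] at hK), hK⟩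
      · rintro ⟨h, hK⟩
        exact ⟨hK, Or.inl h⟩
    rw [Nat.card_congr (Equiv.subtypeEquivRight hiff),
      cardA_eq hp hs (show (0:ℕ) < s by omega), hm21, Nat.sub_zero]
    ring
  · -- middle range
    intro j hj1 hj2
    have hjs : j < s := by omega
    rw [etilde_eq_pairs]
    have hsplit : ∀ c : (Fin (m+2) → ZMod (p^s)) × (Fin (m+2) → ZMod (p^s)),
        (Kc c.1 c.2 = p ^ j ∧ ((∃ i, IsUnit (c.1 i)) ∨ (∃ i, IsUnit (c.2 i))))
          ↔ (((∃ i, IsUnit (c.1 i)) ∧ Kc c.1 c.2 = p ^ j) ∨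
             ((∃ i, IsUnit (c.2 i)) ∧ (¬ (∃ i, IsUnit (c.1 i)) ∧ Kc c.1 c.2 = p ^ j))) := by
      intro c
      constructor
      · rintro ⟨hK, h⟩
        by_cases h1 : ∃ i, IsUnit (c.1 i)
        · exact Or.inl ⟨h1, hK⟩
        · exact Or.inr ⟨h.resolve_left h1, h1, hK⟩
      · rintro (⟨h1, h2⟩ | ⟨h1, h2, h3⟩)
        · exact ⟨h2, Or.inl h1⟩
        · exact ⟨h3, Or.inr h1⟩
    rw [Nat.card_congr (Equiv.subtypeEquivRight hsplit),
      Nat.card_congr (orSplit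
        (fun c : (Fin (m+2) → ZMod (p^s)) × (Fin (m+2) → ZMod (p^s)) =>
          (∃ i, IsUnit (c.1 i)) ∧ Kc c.1 c.2 = p ^ j)
        (fun c => (∃ i, IsUnit (c.2 i)) ∧ (¬ (∃ i, IsUnit (c.1 i)) ∧ Kc c.1 c.2 = p ^ j))),
      Nat.card_sum]
    have hfix : ∀ c : (Fin (m+2) → ZMod (p^s)) × (Fin (m+2) → ZMod (p^s)),
        (¬ ((∃ i, IsUnit (c.1 i)) ∧ Kc c.1 c.2 = p ^ j) ∧
          ((∃ i, IsUnit (c.2 i)) ∧ (¬ (∃ i, IsUnit (c.1 i)) ∧ Kc c.1 c.2 = p ^ j)))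
          ↔ ((∃ i, IsUnit (c.2 i)) ∧ (¬ (∃ i, IsUnit (c.1 i)) ∧ Kc c.1 c.2 = p ^ j)) := by
      intro c
      constructor
      · rintro ⟨-, h⟩; exact h
      · intro h; exact ⟨fun hc => h.2.1 hc.1, h⟩
    rw [Nat.card_congr (Equiv.subtypeEquivRight hfix), cardA_eq hp hs hjs,
      cardB_eq hp hs hj1 hjs, hm21]
    ring
  · -- j > s
    intro j hj
    rw [etilde_eq_pairs, Nat.card_eq_zero]
    left
    constructor
    rintro ⟨⟨c1, c2⟩, hK, hor⟩
    have hdvd := K_dvd hp hs c1 c2 hor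
    rw [hK, Nat.pow_dvd_pow_iff_le_right hp.one_lt] at hdvd
    omega
end

section
/- For n ≥ 2 and 0 ≤ j < s, the number of n×2 matrices A over Z_{p^s} such that Ax ≡ 0 (mod p^s) has exactly p^j solutions equals φ_n(p^s)·φ_{n-1}(p^{s-j})·p^{s-j}·binom(j+1,1)_p. -/
set_option maxHeartbeats 1000000

open Finset

section Main
variable {p s : ℕ}

variable {p s : ℕ}

lemma Ppow_eq_zero_iff (hp : p.Prime) {c : ℕ} :
    ((p : ZMod (p^s)))^c = 0 ↔ s ≤ c := by
  rw [← Nat.cast_pow, ZMod.natCast_eq_zero_iff,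
    Nat.pow_dvd_pow_iff_le_right hp.one_lt]

lemma mul_pow_eq_zero_iff (hp : p.Prime) {a : ℕ} (ha : a ≤ s) (x : ZMod (p^s)) :
    ((p : ZMod (p^s)))^(s-a) * x = 0 ↔ ∃ z : ZMod (p^s), x = z * (p : ZMod (p^s))^a := by
  constructor
  · intro h
    haveI : NeZero (p^s) := ⟨pow_ne_zero _ hp.ne_zero⟩
    have hx : x = ((x.val : ℕ) : ZMod (p^s)) := (ZMod.natCast_zmod_val x).symm
    rw [hx, ← Nat.cast_pow, ← Nat.cast_mul, ZMod.natCast_eq_zero_iff] at h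
    have hdvd : (p:ℕ)^a ∣ x.val := by
      have h2 : (p:ℕ)^(s-a) * p^a ∣ p^(s-a) * x.val := by
        rwa [← pow_add, Nat.sub_add_cancel ha]
      exact (mul_dvd_mul_iff_left (pow_ne_zero (s-a) hp.ne_zero)).mp h2
    obtain ⟨m, hm⟩ := hdvd
    refine ⟨(m : ZMod (p^s)), ?_⟩
    rw [hx, hm]
    push_cast
    ring
  · rintro ⟨z, rfl⟩
    have h1 : ((p : ZMod (p^s)))^(s-a) * (z * (p : ZMod (p^s))^a)
        = z * ((p : ZMod (p^s)))^(s-a+a) := by ring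
    rw [h1, Nat.sub_add_cancel ha, (Ppow_eq_zero_iff hp).mpr le_rfl, mul_zero]

lemma card_ann (hp : p.Prime) [NeZero (p^s)] {t : ℕ} (ht : t ≤ s) :
    (univ.filter fun x : ZMod (p^s) => (p : ZMod (p^s))^t * x = 0).card = p^t := by
  have key : ∀ x : ZMod (p^s), ((p : ZMod (p^s))^t * x = 0) ↔ (p:ℕ)^(s-t) ∣ x.val := by
    intro x
    conv_lhs => rw [← ZMod.natCast_zmod_val x]
    rw [← Nat.cast_pow, ← Nat.cast_mul, ZMod.natCast_eq_zero_iff]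
    constructor
    · intro h
      have h2 : (p:ℕ)^t * p^(s-t) ∣ p^t * x.val := by
        rwa [← pow_add, Nat.add_sub_cancel' ht]
      exact (mul_dvd_mul_iff_left (pow_ne_zero t hp.ne_zero)).mp h2
    · rintro ⟨m, hm⟩
      rw [hm, ← mul_assoc, ← pow_add, Nat.add_sub_cancel' ht]
      exact Dvd.intro m rfl
  have hcard : (univ.filter fun x : ZMod (p^s) => (p : ZMod (p^s))^t * x = 0).card
      = ((Finset.range (p^s)).filter fun v => (p:ℕ)^(s-t) ∣ v).card := by
    apply Finset.card_nbij (fun x => x.val)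
    · intro x hx
      simp only [mem_coe, mem_filter, mem_univ, true_and, mem_range, key] at hx ⊢
      exact ⟨ZMod.val_lt x, hx⟩
    · intro x hx y hy hxy
      exact ZMod.val_injective _ hxy
    · intro v hv
      simp only [coe_filter, Set.mem_setOf_eq, mem_range, mem_univ, true_and,
        Set.mem_image, mem_coe] at hv ⊢
      refine ⟨(v : ZMod (p^s)), ?_, ?_⟩
      · rw [key, ZMod.val_natCast_of_lt hv.1]
        exact hv.2
      · exact ZMod.val_natCast_of_lt hv.1
  rw [hcard]
  have himg : (Finset.range (p^s)).filter (fun v => (p:ℕ)^(s-t) ∣ v)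
      = (Finset.range (p^t)).image (fun k => (p:ℕ)^(s-t) * k) := by
    ext v
    simp only [mem_filter, mem_range, mem_image]
    constructor
    · rintro ⟨hv, m, rfl⟩
      refine ⟨m, ?_, rfl⟩
      by_contra hm
      push_neg at hm
      have hle : (p:ℕ)^s ≤ p^(s-t) * m := by
        calc (p:ℕ)^s = p^(s-t) * p^t := by rw [← pow_add, Nat.sub_add_cancel ht]
        _ ≤ p^(s-t) * m := Nat.mul_le_mul_left _ hm
      omega
    · rintro ⟨k, hk, rfl⟩
      refine ⟨?_, Dvd.intro k rfl⟩
      calc (p:ℕ)^(s-t) * k < p^(s-t) * p^t :=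
        Nat.mul_lt_mul_of_le_of_lt le_rfl hk (pow_pos hp.pos _)
      _ = p^s := by rw [← pow_add, Nat.sub_add_cancel ht]
  rw [himg, Finset.card_image_of_injective _ (fun a b h => by
    exact Nat.eq_of_mul_eq_mul_left (pow_pos hp.pos _) h), Finset.card_range]

lemma exists_unit_rep (hp : p.Prime) (x : ZMod (p^s)) :
    ∃ v ≤ s, ∃ z : ZMod (p^s), IsUnit z ∧ x = z * (p : ZMod (p^s))^v := by
  haveI : NeZero (p^s) := ⟨pow_ne_zero _ hp.ne_zero⟩
  by_cases hx : x = 0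
  · exact ⟨s, le_rfl, 1, isUnit_one, by
      rw [hx, one_mul, (Ppow_eq_zero_iff hp).mpr le_rfl]⟩
  · have hval : x.val ≠ 0 := fun h => hx (by rw [← ZMod.natCast_zmod_val x, h, Nat.cast_zero])
    obtain ⟨v, m, hpm, hvm⟩ := Nat.exists_eq_pow_mul_and_not_dvd hval p hp.ne_one
    have hm0 : m ≠ 0 := by rintro rfl; exact hpm (dvd_zero p)
    have hvs : v ≤ s := by
      by_contra hv
      push_neg at hv
      have h1 : (p:ℕ)^s ≤ p^v := Nat.pow_le_pow_right hp.pos (le_of_lt hv)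
      have h2 : (p:ℕ)^v ≤ p^v * m := Nat.le_mul_of_pos_right _ (Nat.pos_of_ne_zero hm0)
      have h3 := ZMod.val_lt x
      omega
    refine ⟨v, hvs, (m : ZMod (p^s)), ?_, ?_⟩
    · rw [ZMod.isUnit_iff_coprime]
      exact ((Nat.Prime.coprime_iff_not_dvd hp).mpr hpm).symm.pow_right _
    · conv_lhs => rw [← ZMod.natCast_zmod_val x]
      rw [hvm]
      push_cast
      ring

lemma pow_mul_eq_zero_mono (hp : p.Prime) {c c' : ℕ} (hcc : c ≤ c') {x : ZMod (p^s)}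
    (h : (p : ZMod (p^s))^c * x = 0) : (p : ZMod (p^s))^(c') * x = 0 := by
  have h1 : ((p : ZMod (p^s)))^(c') = p^(c'-c) * p^c := by
    rw [← pow_add]; congr 1; omega
  rw [h1, mul_assoc, h, mul_zero]

lemma ann_card_master (hp : p.Prime) [NeZero (p^s)] {n : ℕ} (hn : 0 < n)
    (w : Fin n → ZMod (p^s)) :
    ∃ m ≤ s, (univ.filter fun y : ZMod (p^s) => ∀ r, y * w r = 0).card = p^m ∧
      (∀ r, (p : ZMod (p^s))^(s-m) * w r = 0) ∧
      (m < s → ∃ r, (p : ZMod (p^s))^(s-m-1) * w r ≠ 0) := by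
  have H : ∀ r, ∃ v ≤ s, ∃ z : ZMod (p^s), IsUnit z ∧ w r = z * (p : ZMod (p^s))^v :=
    fun r => exists_unit_rep hp (w r)
  choose v hvs z hz hw using H
  haveI : Nonempty (Fin n) := ⟨⟨0, hn⟩⟩
  obtain ⟨r₀, -, hr₀⟩ := Finset.exists_min_image univ v ⟨Classical.arbitrary _, mem_univ _⟩
  refine ⟨v r₀, hvs r₀, ?_, ?_, ?_⟩
  · have hset : (univ.filter fun y : ZMod (p^s) => ∀ r, y * w r = 0)
        = (univ.filter fun y : ZMod (p^s) => (p : ZMod (p^s))^(v r₀) * y = 0) := by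
      ext y
      simp only [mem_filter, mem_univ, true_and]
      constructor
      · intro h
        have h0 := h r₀
        rw [hw r₀] at h0
        obtain ⟨u, hu⟩ := hz r₀
        have : (u : ZMod (p^s)) * ((p : ZMod (p^s))^(v r₀) * y) = 0 := by
          rw [← h0, hu]; ring
        exact (Units.mul_right_eq_zero u).mp this
      · intro h r
        rw [hw r]
        have h1 : ((p : ZMod (p^s)))^(v r) * y = 0 :=
          pow_mul_eq_zero_mono hp (hr₀ r (mem_univ r)) h
        calc y * (z r * (p : ZMod (p^s))^(v r)) = z r * ((p : ZMod (p^s))^(v r) * y) := by ring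
        _ = 0 := by rw [h1, mul_zero]
    rw [hset, card_ann hp (hvs r₀)]
  · intro r
    rw [hw r]
    have h1 : ((p : ZMod (p^s)))^(s - v r₀) * (z r * (p : ZMod (p^s))^(v r))
        = z r * ((p : ZMod (p^s)))^(s - v r₀ + v r) := by rw [pow_add]; ring
    rw [h1, (Ppow_eq_zero_iff hp).mpr (by have := hr₀ r (mem_univ r); omega), mul_zero]
  · intro hms
    refine ⟨r₀, ?_⟩
    rw [hw r₀]
    have h1 : ((p : ZMod (p^s)))^(s - v r₀ - 1) * (z r₀ * (p : ZMod (p^s))^(v r₀))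
        = z r₀ * ((p : ZMod (p^s)))^(s - v r₀ - 1 + v r₀) := by rw [pow_add]; ring
    rw [h1]
    intro hzero
    obtain ⟨u, hu⟩ := hz r₀
    rw [← hu] at hzero
    have h2 := (Units.mul_right_eq_zero u).mp hzero
    rw [Ppow_eq_zero_iff hp] at h2
    omega

lemma ann_card_iff (hp : p.Prime) [NeZero (p^s)] {n k : ℕ} (hn : 0 < n) (hk : k < s)
    (w : Fin n → ZMod (p^s)) :
    (univ.filter fun y : ZMod (p^s) => ∀ r, y * w r = 0).card = p^k ↔
      ((∀ r, (p : ZMod (p^s))^(s-k) * w r = 0) ∧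
        ∃ r, (p : ZMod (p^s))^(s-k-1) * w r ≠ 0) := by
  obtain ⟨m, hms, hcard, hall, hex⟩ := ann_card_master hp hn w
  constructor
  · intro h
    have hpow : (p:ℕ)^m = p^k := by rw [← hcard, h]
    have hmk : m = k := Nat.pow_right_injective hp.two_le hpow
    subst hmk
    exact ⟨hall, hex hk⟩
  · rintro ⟨h1, h2⟩
    have hmk : m = k := by
      by_contra hne
      rcases Nat.lt_or_ge m k with hlt | hge
      · have hms' : m < s := by omega
        obtain ⟨r₀, hr₀⟩ := hex hms'
        exact hr₀ (pow_mul_eq_zero_mono hp (by omega) (h1 r₀))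
      · have hgt : k < m := by omega
        obtain ⟨r, hr⟩ := h2
        exact hr (pow_mul_eq_zero_mono hp (by omega) (hall r))
    rw [hcard, hmk]

lemma filter_pi_card [NeZero (p^s)] {n : ℕ} (Q : ZMod (p^s) → Prop) [DecidablePred Q]
    {q : ℕ} (hq : (univ.filter Q).card = q) :
    (univ.filter fun w : Fin n → ZMod (p^s) => ∀ r, Q (w r)).card = q ^ n := by
  rw [← hq]
  have hset : (univ.filter fun w : Fin n → ZMod (p^s) => ∀ r, Q (w r))
      = Fintype.piFinset (fun _ : Fin n => univ.filter Q) := by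
    ext w
    simp [Fintype.mem_piFinset]
  rw [hset, Fintype.card_piFinset]
  simp

lemma filter_pi_card_ne [NeZero (p^s)] {n : ℕ} (i : Fin n) (Q : ZMod (p^s) → Prop)
    [DecidablePred Q] {q : ℕ} (hq : (univ.filter Q).card = q) :
    (univ.filter fun w : Fin n → ZMod (p^s) => ∀ r, r ≠ i → Q (w r)).card
      = (p^s) * q ^ (n-1) := by
  rw [← hq]
  have hset : (univ.filter fun w : Fin n → ZMod (p^s) => ∀ r, r ≠ i → Q (w r))
      = Fintype.piFinset (fun r : Fin n => if r = i then univ else univ.filter Q) := by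
    ext w
    simp only [mem_filter, mem_univ, true_and, Fintype.mem_piFinset]
    constructor
    · intro h r
      by_cases hr : r = i
      · simp [hr]
      · simp only [hr, if_neg, if_false, mem_filter, mem_univ, true_and]
        exact h r hr
    · intro h r hr
      have := h r
      simp only [hr, if_neg, if_false, mem_filter, mem_univ, true_and] at this
      exact this
  rw [hset, Fintype.card_piFinset]
  rw [← Finset.mul_prod_erase univ _ (mem_univ i)]
  simp only [if_pos rfl]
  have h1 : ∀ r ∈ univ.erase i,
      (if r = i then (univ : Finset (ZMod (p^s))) else univ.filter Q).card
        = (univ.filter Q).card := by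
    intro r hr
    rw [if_neg (Finset.ne_of_mem_erase hr)]
  rw [Finset.prod_congr rfl h1, Finset.prod_const, Finset.card_erase_of_mem (mem_univ i)]
  simp [ZMod.card]

lemma filter_and_not_card {α : Type*} [Fintype α] [DecidableEq α] (A B : α → Prop)
    [DecidablePred A] [DecidablePred B] (h : ∀ w, B w → A w) :
    (univ.filter fun w => A w ∧ ¬ B w).card
      = (univ.filter A).card - (univ.filter B).card := by
  have hset : (univ.filter fun w => A w ∧ ¬ B w) = univ.filter A \ univ.filter B := by
    ext w
    simp only [mem_filter, mem_univ, true_and, mem_sdiff]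
  rw [hset]
  refine Finset.card_sdiff_of_subset ?_
  intro w hw
  simp only [mem_filter, mem_univ, true_and] at hw ⊢
  exact h w hw

end Main

lemma gauss_eq (p j : ℕ) : gaussBinom p (j+1) 1 = ∑ a ∈ Finset.range (j+1), p^a := by
  induction j with
  | zero => simp [gaussBinom]
  | succ j ih =>
    have h1 : gaussBinom p (j+2) 1 = gaussBinom p (j+1) 0 + p^1 * gaussBinom p (j+1) 1 := rfl
    have h2 : gaussBinom p (j+1) 0 = 1 := rfl
    have h3 : ∑ a ∈ Finset.range (j+2), p^a
        = ∑ a ∈ Finset.range (j+1), p^(a+1) + p^0 :=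
      Finset.sum_range_succ' (fun a => p^a) (j+1)
    rw [h1, h2, ih, h3, Finset.mul_sum, pow_zero]
    have h4 : ∀ a, p^1 * p^a = p^(a+1) := fun a => by ring
    rw [Finset.sum_congr rfl (fun a _ => h4 a)]
    omega

lemma phi_eq_s12 {p : ℕ} (hp : p.Prime) {e : ℕ} (he : 1 ≤ e) (m : ℕ) :
    phi m (p^e) = (p^e)^m - (p^(e-1))^m := by
  unfold phi
  have key : ∀ a : ℕ, (¬ Nat.Coprime a (p^e)) ↔ p ∣ a := by
    intro a
    rw [Nat.coprime_pow_right_iff (by omega), Nat.coprime_comm,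
      Nat.Prime.coprime_iff_not_dvd hp, not_not]
  have htot : (Fintype.piFinset fun _ : Fin m => Finset.Icc 1 (p^e)).card = (p^e)^m := by
    rw [Fintype.card_piFinset]
    simp [Nat.card_Icc]
  have hcompl :
      ((Fintype.piFinset fun _ : Fin m => Finset.Icc 1 (p^e)).filter
        (fun a : Fin m → ℕ => ¬ ∃ i, Nat.Coprime (a i) (p^e))).card = (p^(e-1))^m := by
    have hset : ((Fintype.piFinset fun _ : Fin m => Finset.Icc 1 (p^e)).filter
          (fun a : Fin m → ℕ => ¬ ∃ i, Nat.Coprime (a i) (p^e)))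
        = Fintype.piFinset fun _ : Fin m =>
            (Finset.Icc 1 (p^e)).filter (fun x => ¬ Nat.Coprime x (p^e)) := by
      ext a
      simp only [mem_filter, Fintype.mem_piFinset, not_exists]
      constructor
      · rintro ⟨h1, h2⟩ i
        exact ⟨h1 i, h2 i⟩
      · intro h
        exact ⟨fun i => (h i).1, fun i => (h i).2⟩
    rw [hset, Fintype.card_piFinset]
    have hone : ((Finset.Icc 1 (p^e)).filter (fun x => ¬ Nat.Coprime x (p^e))).card
        = p^(e-1) := by
      have hs2 : ((Finset.Icc 1 (p^e)).filter (fun x => ¬ Nat.Coprime x (p^e)))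
          = ((Finset.Ioc 0 (p^e)).filter (fun x => p ∣ x)) := by
        rw [← Finset.Icc_add_one_left_eq_Ioc]
        exact Finset.filter_congr (fun x _ => by rw [key x])
      rw [hs2, Nat.Ioc_filter_dvd_card_eq_div]
      have : (p:ℕ)^e = p^(e-1) * p := by
        rw [← pow_succ]; congr 1; omega
      rw [this, Nat.mul_div_cancel _ hp.pos]
    simp [hone]
  have hnot : ((Fintype.piFinset fun _ : Fin m => Finset.Icc 1 (p^e)).filter
        (fun a : Fin m → ℕ => ∃ i, Nat.Coprime (a i) (p^e)))
      = (Fintype.piFinset fun _ : Fin m => Finset.Icc 1 (p^e)) \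
        ((Fintype.piFinset fun _ : Fin m => Finset.Icc 1 (p^e)).filter
          (fun a : Fin m → ℕ => ¬ ∃ i, Nat.Coprime (a i) (p^e))) := by
    rw [← Finset.filter_not]
    simp only [not_not]
  rw [hnot, Finset.card_sdiff_of_subset (Finset.filter_subset _ _), htot, hcompl]

def matE (p s n : ℕ) : Matrix (Fin n) (Fin 2) (ZMod (p^s))
    ≃ (Fin n → ZMod (p^s)) × (Fin n → ZMod (p^s)) where
  toFun := fun A => (fun i => A i 0, fun i => A i 1)
  invFun := fun c => Matrix.of fun i k => if k = 0 then c.1 i else c.2 i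
  left_inv := fun A => by
    funext i k
    fin_cases k <;> simp [Matrix.of_apply]
  right_inv := fun c => by
    constructor <;> funext i <;> simp [Matrix.of_apply]

lemma E_eq_pairs (p s n j : ℕ) [NeZero (p^s)] :
    E p s n 2 j = (univ.filter fun c : (Fin n → ZMod (p^s)) × (Fin n → ZMod (p^s)) =>
      (univ.filter fun z : ZMod (p^s) × ZMod (p^s) =>
        z.1 • c.1 + z.2 • c.2 = 0).card = p^j).card := by
  have hQ : ∀ A : Matrix (Fin n) (Fin 2) (ZMod (p^s)),
      Nat.card {x : Fin 2 → ZMod (p^s) // A.mulVec x = 0}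
        = (univ.filter fun z : ZMod (p^s) × ZMod (p^s) =>
            z.1 • (matE p s n A).1 + z.2 • (matE p s n A).2 = 0).card := by
    intro A
    have e2 : {x : Fin 2 → ZMod (p^s) // A.mulVec x = 0}
        ≃ {z : ZMod (p^s) × ZMod (p^s) //
            z.1 • (matE p s n A).1 + z.2 • (matE p s n A).2 = 0} := by
      refine (Equiv.subtypeEquiv (piFinTwoEquiv fun _ => ZMod (p^s)) ?_)
      intro x
      have hmv : ∀ i, A.mulVec x i = x 0 * A i 0 + x 1 * A i 1 := by
        intro i
        simp only [Matrix.mulVec, dotProduct, Fin.sum_univ_two]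
        ring
      constructor
      · intro h
        funext i
        have h1 := congrFun h i
        rw [hmv i] at h1
        exact h1
      · intro h
        funext i
        have h1 := congrFun h i
        simp only [piFinTwoEquiv_apply, Pi.add_apply, Pi.smul_apply, smul_eq_mul,
          Pi.zero_apply, matE, Equiv.coe_fn_mk] at h1
        rw [Pi.zero_apply, hmv i]
        exact h1
    rw [Nat.card_congr e2, Nat.card_eq_fintype_card, Fintype.card_subtype]
  unfold E
  have e3 : {A : Matrix (Fin n) (Fin 2) (ZMod (p^s)) //
      Nat.card {x : Fin 2 → ZMod (p^s) // A.mulVec x = 0} = p^j}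
      ≃ {c : (Fin n → ZMod (p^s)) × (Fin n → ZMod (p^s)) //
          (univ.filter fun z : ZMod (p^s) × ZMod (p^s) =>
            z.1 • c.1 + z.2 • c.2 = 0).card = p^j} := by
    refine Equiv.subtypeEquiv (matE p s n) ?_
    intro A
    rw [hQ A]
  rw [Nat.card_congr e3, Nat.card_eq_fintype_card, Fintype.card_subtype]

lemma pair_card_eq (p s n : ℕ) [NeZero (p^s)] (c₀ c₁ : Fin n → ZMod (p^s)) :
    (univ.filter fun z : ZMod (p^s) × ZMod (p^s) => z.1 • c₀ + z.2 • c₁ = 0).card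
      = (univ.filter fun x : ZMod (p^s) => ∀ r, x * c₀ r = 0).card
        * (univ.filter fun y : ZMod (p^s) => ∃ z : ZMod (p^s), y • c₁ = z • c₀).card := by
  set Z : ZMod (p^s) → ZMod (p^s) :=
    fun y => if h : ∃ z : ZMod (p^s), y • c₁ = z • c₀ then h.choose else 0 with hZdef
  have hZ : ∀ y : ZMod (p^s), (∃ z : ZMod (p^s), y • c₁ = z • c₀) → y • c₁ = (Z y) • c₀ := by
    intro y h
    simp only [hZdef, dif_pos h]
    exact h.choose_spec
  have e : {z : ZMod (p^s) × ZMod (p^s) // z.1 • c₀ + z.2 • c₁ = 0}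
      ≃ {x : ZMod (p^s) // ∀ r, x * c₀ r = 0}
        × {y : ZMod (p^s) // ∃ z : ZMod (p^s), y • c₁ = z • c₀} := by
    have hex : ∀ w : {z : ZMod (p^s) × ZMod (p^s) // z.1 • c₀ + z.2 • c₁ = 0},
        w.1.2 • c₁ = (-w.1.1) • c₀ := by
      intro w
      rw [neg_smul]
      exact eq_neg_of_add_eq_zero_right w.2
    refine ⟨fun w => (⟨w.1.1 + Z w.1.2, ?_⟩, ⟨w.1.2, ⟨-w.1.1, hex w⟩⟩),
      fun v => ⟨(v.1.1 - Z v.2.1, v.2.1), ?_⟩, ?_, ?_⟩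
    · intro r
      have h0 : (w.1.1 + Z w.1.2) • c₀ = 0 := by
        rw [add_smul, ← hZ _ ⟨-w.1.1, hex w⟩]
        exact w.2
      have := congrFun h0 r
      simpa [smul_eq_mul] using this
    · have ha : v.1.1 • c₀ = 0 := by
        funext r
        simpa [smul_eq_mul] using v.1.2 r
      rw [sub_smul, ha, zero_sub, ← hZ _ v.2.2, neg_add_cancel]
    · intro w
      apply Subtype.ext
      simp
    · intro v
      apply Prod.ext
      · apply Subtype.ext
        simp
      · apply Subtype.ext
        rfl
  have h1 : (univ.filter fun z : ZMod (p^s) × ZMod (p^s) => z.1 • c₀ + z.2 • c₁ = 0).card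
      = Fintype.card {z : ZMod (p^s) × ZMod (p^s) // z.1 • c₀ + z.2 • c₁ = 0} :=
    (Fintype.card_subtype _).symm
  rw [h1, Fintype.card_congr e, Fintype.card_prod, Fintype.card_subtype,
    Fintype.card_subtype]

section Main2
variable {p s : ℕ}

lemma count_T (hp : p.Prime) [NeZero (p^s)] {n j m : ℕ} (hn : 2 ≤ n) (hj : j < s)
    (hm : m ≤ j) (c₀ : Fin n → ZMod (p^s))
    (hall : ∀ r, (p : ZMod (p^s))^(s-m) * c₀ r = 0)
    (i : Fin n) (hi : (p : ZMod (p^s))^(s-m-1) * c₀ i ≠ 0) :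
    (univ.filter fun c₁ : Fin n → ZMod (p^s) =>
        (univ.filter fun y : ZMod (p^s) => ∃ z : ZMod (p^s), y • c₁ = z • c₀).card
          = p^(j-m)).card
      = p^s * (p^(s-(j-m)))^(n-1) - p^s * (p^(s-(j-m)-1))^(n-1) := by
  have hms : m ≤ s := le_trans hm (le_of_lt hj)
  set k := j - m with hk
  have hks : k < s := by omega
  -- extract the primitive vector u
  have hdiv : ∀ r, ∃ z : ZMod (p^s), c₀ r = z * (p : ZMod (p^s))^m :=
    fun r => (mul_pow_eq_zero_iff hp hms (c₀ r)).mp (hall r)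
  choose u hu using hdiv
  have hui : IsUnit (u i) := by
    obtain ⟨v, hvs, z, hz, hzv⟩ := exists_unit_rep hp (u i)
    rcases Nat.eq_zero_or_pos v with hv0 | hv0
    · rw [hv0, pow_zero, mul_one] at hzv
      rw [hzv]; exact hz
    · exfalso
      apply hi
      rw [hu i, hzv]
      have h1 : (p : ZMod (p^s))^(s-m-1) * (z * (p : ZMod (p^s))^v * (p : ZMod (p^s))^m)
          = z * (p : ZMod (p^s))^(s-m-1+v+m) := by
        rw [pow_add, pow_add]; ring
      rw [h1, (Ppow_eq_zero_iff hp).mpr (by omega), mul_zero]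
  set ζ : (ZMod (p^s))ˣ := hui.unit with hζdef
  have hζ : (ζ : ZMod (p^s)) = u i := hui.unit_spec
  have hinv : ((ζ⁻¹ : (ZMod (p^s))ˣ) : ZMod (p^s)) * (ζ : ZMod (p^s)) = 1 := ζ.inv_mul
  set X : Fin n → ZMod (p^s) := u - Pi.single i 1 with hX
  set f : (Fin n → ZMod (p^s)) → (Fin n → ZMod (p^s)) :=
    fun d => d + d i • X with hf
  set g : (Fin n → ZMod (p^s)) → (Fin n → ZMod (p^s)) :=
    fun w => w - (((ζ⁻¹ : (ZMod (p^s))ˣ) : ZMod (p^s)) * w i) • X with hg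
  have hXi : X i = u i - 1 := by
    simp [hX, Pi.single_eq_same]
  have hfi : ∀ d, (f d) i = d i * u i := by
    intro d
    simp only [hf, Pi.add_apply, Pi.smul_apply, smul_eq_mul, hXi]
    ring
  have hgf : ∀ d, g (f d) = d := by
    intro d
    show f d - (((ζ⁻¹ : (ZMod (p^s))ˣ) : ZMod (p^s)) * (f d) i) • X = d
    rw [hfi]
    have h2 : ((ζ⁻¹ : (ZMod (p^s))ˣ) : ZMod (p^s)) * (d i * u i) = d i := by
      rw [← hζ]
      calc ((ζ⁻¹ : (ZMod (p^s))ˣ) : ZMod (p^s)) * (d i * ↑ζ)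
          = d i * (((ζ⁻¹ : (ZMod (p^s))ˣ) : ZMod (p^s)) * ↑ζ) := by ring
      _ = d i := by rw [hinv, mul_one]
    rw [h2]
    show d + d i • X - d i • X = d
    exact add_sub_cancel_right d (d i • X)
  have hgi : ∀ w, (g w) i = ((ζ⁻¹ : (ZMod (p^s))ˣ) : ZMod (p^s)) * w i := by
    intro w
    simp only [hg, Pi.sub_apply, Pi.smul_apply, smul_eq_mul, hXi]
    rw [← hζ]
    have h3 : ((ζ⁻¹ : (ZMod (p^s))ˣ) : ZMod (p^s)) * w i * ((ζ : ZMod (p^s)) - 1)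
        = w i - ((ζ⁻¹ : (ZMod (p^s))ˣ) : ZMod (p^s)) * w i := by
      have h4 : ((ζ⁻¹ : (ZMod (p^s))ˣ) : ZMod (p^s)) * w i * (ζ : ZMod (p^s)) = w i := by
        calc ((ζ⁻¹ : (ZMod (p^s))ˣ) : ZMod (p^s)) * w i * (ζ : ZMod (p^s))
            = w i * (((ζ⁻¹ : (ZMod (p^s))ˣ) : ZMod (p^s)) * ↑ζ) := by ring
        _ = w i := by rw [hinv, mul_one]
      calc ((ζ⁻¹ : (ZMod (p^s))ˣ) : ZMod (p^s)) * w i * ((ζ : ZMod (p^s)) - 1)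
          = ((ζ⁻¹ : (ZMod (p^s))ˣ) : ZMod (p^s)) * w i * (ζ : ZMod (p^s))
            - ((ζ⁻¹ : (ZMod (p^s))ˣ) : ZMod (p^s)) * w i := by ring
      _ = w i - ((ζ⁻¹ : (ZMod (p^s))ˣ) : ZMod (p^s)) * w i := by rw [h4]
    rw [h3]
    ring
  have hfg : ∀ w, f (g w) = w := by
    intro w
    show g w + (g w) i • X = w
    rw [hgi]
    show w - (((ζ⁻¹ : (ZMod (p^s))ˣ) : ZMod (p^s)) * w i) • X
        + (((ζ⁻¹ : (ZMod (p^s))ˣ) : ZMod (p^s)) * w i) • X = w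
    exact sub_add_cancel _ _
  have hc₀u : c₀ = (p : ZMod (p^s))^m • u := by
    funext r
    rw [hu r, Pi.smul_apply, smul_eq_mul, mul_comm]
  have hflin : ∀ (y : ZMod (p^s)) d, y • f d = f (y • d) := by
    intro y d
    show y • (d + d i • X) = y • d + (y • d) i • X
    rw [smul_add, Pi.smul_apply, smul_eq_mul, smul_smul]
  have hfsingle : ∀ c : ZMod (p^s), f (c • (Pi.single i 1 : Fin n → ZMod (p^s))) = c • u := by
    intro c
    show c • (Pi.single i 1 : Fin n → ZMod (p^s))
        + (c • (Pi.single i 1 : Fin n → ZMod (p^s))) i • X = c • u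
    have h5 : (c • (Pi.single i 1 : Fin n → ZMod (p^s))) i = c := by
      simp [Pi.single_eq_same]
    rw [h5, hX, smul_sub]
    abel
  have hinj : Function.Injective f := by
    intro d d' hdd
    rw [← hgf d, ← hgf d', hdd]
  -- the W vector
  set W : (Fin n → ZMod (p^s)) → (Fin n → ZMod (p^s)) :=
    fun d r => if r = i then (p : ZMod (p^s))^(s-m) * d i else d r with hW
  have hTpred : ∀ d (y : ZMod (p^s)),
      (∃ z : ZMod (p^s), y • f d = z • c₀) ↔ (∀ r, y * W d r = 0) := by
    intro d y
    constructor
    · rintro ⟨z, hzz⟩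
      rw [hc₀u, smul_smul, ← hfsingle, hflin] at hzz
      have hyd : y • d = (z * (p : ZMod (p^s))^m) • (Pi.single i 1 : Fin n → ZMod (p^s)) :=
        hinj hzz
      intro r
      by_cases hr : r = i
      · subst hr
        have hyi : y * d r = z * (p : ZMod (p^s))^m := by
          have := congrFun hyd r
          simpa [Pi.single_eq_same] using this
        simp only [hW, if_pos rfl]
        calc y * ((p : ZMod (p^s))^(s-m) * d r)
            = (p : ZMod (p^s))^(s-m) * (y * d r) := by ring
        _ = (p : ZMod (p^s))^(s-m) * (z * (p : ZMod (p^s))^m) := by rw [hyi]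
        _ = z * ((p : ZMod (p^s))^(s-m) * (p : ZMod (p^s))^m) := by ring
        _ = 0 := by
            rw [← pow_add, show s-m+m = s by omega, (Ppow_eq_zero_iff hp).mpr le_rfl,
              mul_zero]
      · have := congrFun hyd r
        simp only [Pi.smul_apply, smul_eq_mul, Pi.single_eq_of_ne hr, mul_zero] at this
        simp only [hW, if_neg hr]
        exact this
    · intro h
      have hii := h i
      simp only [hW, if_pos rfl] at hii
      have hii' : (p : ZMod (p^s))^(s-m) * (y * d i) = 0 := by
        rw [← hii]; ring
      obtain ⟨z, hz⟩ := (mul_pow_eq_zero_iff hp hms _).mp hii'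
      refine ⟨z, ?_⟩
      rw [hc₀u, smul_smul, ← hfsingle, hflin]
      apply congrArg f
      funext r
      show y * d r = (z * (p : ZMod (p^s))^m) * (Pi.single i 1 : Fin n → ZMod (p^s)) r
      by_cases hr : r = i
      · subst hr
        rw [Pi.single_eq_same, mul_one]
        exact hz
      · have := h r
        simp only [hW, if_neg hr] at this
        rw [Pi.single_eq_of_ne hr, mul_zero]
        exact this
  -- reindex by f
  have hreind : (univ.filter fun c₁ : Fin n → ZMod (p^s) =>
      (univ.filter fun y : ZMod (p^s) => ∃ z : ZMod (p^s), y • c₁ = z • c₀).card = p^k)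
      = (univ.filter fun d : Fin n → ZMod (p^s) =>
        (univ.filter fun y : ZMod (p^s) => ∃ z : ZMod (p^s), y • f d = z • c₀).card
          = p^k).image f := by
    ext c₁
    simp only [mem_filter, mem_univ, true_and, mem_image]
    constructor
    · intro hc
      refine ⟨g c₁, ?_, hfg c₁⟩
      rw [hfg c₁]
      exact hc
    · rintro ⟨d, hd, rfl⟩
      exact hd
  rw [hreind, Finset.card_image_of_injective _ hinj]
  -- replace predicate by annihilator condition
  have hstep : ∀ d : Fin n → ZMod (p^s),
      ((univ.filter fun y : ZMod (p^s) => ∃ z : ZMod (p^s), y • f d = z • c₀).card = p^k)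
        ↔ ((∀ r, r ≠ i → (p : ZMod (p^s))^(s-k) * d r = 0) ∧
            ¬(∀ r, r ≠ i → (p : ZMod (p^s))^(s-k-1) * d r = 0)) := by
    intro d
    have h6 : (univ.filter fun y : ZMod (p^s) => ∃ z : ZMod (p^s), y • f d = z • c₀)
        = (univ.filter fun y : ZMod (p^s) => ∀ r, y * W d r = 0) :=
      Finset.filter_congr (fun y _ => hTpred d y)
    rw [h6, ann_card_iff hp (by omega) hks (W d)]
    have hWi1 : (p : ZMod (p^s))^(s-k) * W d i = 0 := by
      simp only [hW, if_pos rfl]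
      rw [← mul_assoc, ← pow_add, (Ppow_eq_zero_iff hp).mpr (by omega), zero_mul]
    have hWi2 : (p : ZMod (p^s))^(s-k-1) * W d i = 0 := by
      simp only [hW, if_pos rfl]
      rw [← mul_assoc, ← pow_add, (Ppow_eq_zero_iff hp).mpr (by omega), zero_mul]
    constructor
    · rintro ⟨h1, h2⟩
      constructor
      · intro r hr
        have := h1 r
        simpa only [hW, if_neg hr] using this
      · intro hcon
        obtain ⟨r, hr⟩ := h2
        by_cases hri : r = i
        · subst hri; exact hr hWi2
        · exact hr (by simpa only [hW, if_neg hri] using hcon r hri)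
    · rintro ⟨h1, h2⟩
      push_neg at h2
      obtain ⟨r, hri, hr⟩ := h2
      constructor
      · intro r'
        by_cases hri' : r' = i
        · subst hri'; exact hWi1
        · simpa only [hW, if_neg hri'] using h1 r' hri'
      · exact ⟨r, by simpa only [hW, if_neg hri] using hr⟩
  rw [Finset.filter_congr (fun d _ => by rw [hstep d])]
  have hks1 : s-k ≤ s := by omega
  have hks2 : s-k-1 ≤ s := by omega
  have hcA := card_ann hp hks1
  have hcB := card_ann hp hks2
  have hA := filter_pi_card_ne (p := p) (s := s) i
    (fun x : ZMod (p^s) => (p : ZMod (p^s))^(s-k) * x = 0) hcA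
  have hB := filter_pi_card_ne (p := p) (s := s) i
    (fun x : ZMod (p^s) => (p : ZMod (p^s))^(s-k-1) * x = 0) hcB
  have himp : ∀ d : Fin n → ZMod (p^s),
      (∀ r, r ≠ i → (p : ZMod (p^s))^(s-k-1) * d r = 0) →
        (∀ r, r ≠ i → (p : ZMod (p^s))^(s-k) * d r = 0) := by
    intro d hd r hr
    exact pow_mul_eq_zero_mono hp (Nat.sub_le (s-k) 1) (hd r hr)
  have hdiffc := filter_and_not_card
    (fun d : Fin n → ZMod (p^s) => ∀ r, r ≠ i → (p : ZMod (p^s))^(s-k) * d r = 0)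
    (fun d : Fin n → ZMod (p^s) => ∀ r, r ≠ i → (p : ZMod (p^s))^(s-k-1) * d r = 0)
    himp
  rw [hdiffc]
  rw [hA, hB]

end Main2

lemma pow_sub_factor (p A B D : ℕ) (h : A = B + D) : p^A - p^B = p^B * (p^D - 1) := by
  subst h
  rw [Nat.mul_sub, mul_one, ← pow_add]

theorem E_nx2 (p s n j : ℕ) (hp : p.Prime) (hs : 1 ≤ s) (hn : 2 ≤ n) (hj : j < s) :
    E p s n 2 j =
      phi n (p ^ s) * phi (n - 1) (p ^ (s - j)) * p ^ (s - j) * gaussBinom p (j + 1) 1 := by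
  haveI : NeZero (p^s) := ⟨pow_ne_zero _ hp.ne_zero⟩
  rw [E_eq_pairs p s n j]
  have hfub : (univ.filter fun c : (Fin n → ZMod (p^s)) × (Fin n → ZMod (p^s)) =>
      (univ.filter fun z : ZMod (p^s) × ZMod (p^s) =>
        z.1 • c.1 + z.2 • c.2 = 0).card = p^j).card
      = ∑ c₀ : Fin n → ZMod (p^s), (univ.filter fun c₁ : Fin n → ZMod (p^s) =>
          (univ.filter fun z : ZMod (p^s) × ZMod (p^s) =>
            z.1 • c₀ + z.2 • c₁ = 0).card = p^j).card := by
    rw [Finset.card_filter, ← Finset.univ_product_univ, Finset.sum_product]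
    exact Finset.sum_congr rfl (fun c₀ _ => (Finset.card_filter _ _).symm)
  rw [hfub]
  set N : ℕ → ℕ :=
    fun a => p^s * (p^(s-(j-a)))^(n-1) - p^s * (p^(s-(j-a)-1))^(n-1) with hN
  have hmain : ∀ c₀ : Fin n → ZMod (p^s),
      (univ.filter fun c₁ : Fin n → ZMod (p^s) =>
          (univ.filter fun z : ZMod (p^s) × ZMod (p^s) =>
            z.1 • c₀ + z.2 • c₁ = 0).card = p^j).card
      = ∑ a ∈ Finset.range (j+1),
          if (univ.filter fun x : ZMod (p^s) => ∀ r, x * c₀ r = 0).card = p^a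
          then N a else 0 := by
    intro c₀
    obtain ⟨m, hms, hcard, hall, hex⟩ := ann_card_master hp (show 0 < n by omega) c₀
    by_cases hmj : m ≤ j
    · -- sum equals N m
      have hsum : (∑ a ∈ Finset.range (j+1),
          if (univ.filter fun x : ZMod (p^s) => ∀ r, x * c₀ r = 0).card = p^a
          then N a else 0) = N m := by
        rw [Finset.sum_eq_single m]
        · rw [hcard, if_pos rfl]
        · intro a _ hne
          rw [hcard, if_neg]
          intro hcon
          exact hne (Nat.pow_right_injective hp.two_le hcon).symm
        · intro hnm
          exact absurd (Finset.mem_range.mpr (by omega)) hnm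
      rw [hsum]
      have hcond : ∀ c₁ : Fin n → ZMod (p^s),
          ((univ.filter fun z : ZMod (p^s) × ZMod (p^s) =>
            z.1 • c₀ + z.2 • c₁ = 0).card = p^j)
          ↔ ((univ.filter fun y : ZMod (p^s) =>
              ∃ z : ZMod (p^s), y • c₁ = z • c₀).card = p^(j-m)) := by
        intro c₁
        rw [pair_card_eq p s n c₀ c₁, hcard]
        constructor
        · intro h
          refine Nat.eq_of_mul_eq_mul_left (pow_pos hp.pos m) ?_
          rw [h, ← pow_add]
          congr 1
          omega
        · intro h
          rw [h, ← pow_add]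
          congr 1
          omega
      rw [Finset.filter_congr (fun c₁ _ => hcond c₁)]
      obtain ⟨i, hi⟩ := hex (by omega)
      rw [count_T hp hn hj hmj c₀ hall i hi]
    · -- both sides zero
      have hzero : ∀ a ∈ Finset.range (j+1),
          (if (univ.filter fun x : ZMod (p^s) => ∀ r, x * c₀ r = 0).card = p^a
          then N a else 0) = 0 := by
        intro a ha
        rw [hcard, if_neg]
        intro hcon
        have := Nat.pow_right_injective hp.two_le hcon
        simp only [Finset.mem_range] at ha
        omega
      rw [Finset.sum_congr rfl hzero, Finset.sum_const_zero,
        Finset.card_eq_zero, Finset.filter_eq_empty_iff]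
      intro c₁ _
      rw [pair_card_eq p s n c₀ c₁, hcard]
      intro hcon
      have hT1 : 0 < (univ.filter fun y : ZMod (p^s) =>
          ∃ z : ZMod (p^s), y • c₁ = z • c₀).card := by
        apply Finset.card_pos.mpr
        exact ⟨0, Finset.mem_filter.mpr ⟨mem_univ _, ⟨0, by simp⟩⟩⟩
      have hle : p^m ≤ p^j := by
        calc p^m = p^m * 1 := (mul_one _).symm
        _ ≤ p^m * (univ.filter fun y : ZMod (p^s) =>
              ∃ z : ZMod (p^s), y • c₁ = z • c₀).card := Nat.mul_le_mul_left _ hT1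
        _ = p^j := hcon
      have := (Nat.pow_le_pow_iff_right hp.one_lt).mp hle
      omega
  rw [Finset.sum_congr rfl (fun c₀ _ => hmain c₀), Finset.sum_comm]
  have hinner : ∀ a ∈ Finset.range (j+1),
      (∑ c₀ : Fin n → ZMod (p^s),
        if (univ.filter fun x : ZMod (p^s) => ∀ r, x * c₀ r = 0).card = p^a
        then N a else 0)
      = ((p^(s-a))^n - (p^(s-a-1))^n) * N a := by
    intro a ha
    simp only [Finset.mem_range] at ha
    have has : a < s := by omega
    rw [← Finset.sum_filter, Finset.sum_const, smul_eq_mul]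
    congr 1
    have hiff : ∀ c₀ : Fin n → ZMod (p^s),
        ((univ.filter fun x : ZMod (p^s) => ∀ r, x * c₀ r = 0).card = p^a)
        ↔ ((∀ r, (p : ZMod (p^s))^(s-a) * c₀ r = 0)
            ∧ ¬(∀ r, (p : ZMod (p^s))^(s-a-1) * c₀ r = 0)) := by
      intro c₀
      rw [ann_card_iff hp (show 0 < n by omega) has c₀]
      constructor
      · rintro ⟨h1, h2⟩
        refine ⟨h1, ?_⟩
        intro hcon
        obtain ⟨r, hr⟩ := h2
        exact hr (hcon r)
      · rintro ⟨h1, h2⟩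
        push_neg at h2
        exact ⟨h1, h2⟩
    rw [Finset.filter_congr (fun c₀ _ => hiff c₀)]
    have himp : ∀ c₀ : Fin n → ZMod (p^s),
        (∀ r, (p : ZMod (p^s))^(s-a-1) * c₀ r = 0) →
          (∀ r, (p : ZMod (p^s))^(s-a) * c₀ r = 0) := by
      intro c₀ hc r
      exact pow_mul_eq_zero_mono hp (Nat.sub_le (s-a) 1) (hc r)
    have hca1 := card_ann (s := s) hp (show s-a ≤ s by omega)
    have hca2 := card_ann (s := s) hp (show s-a-1 ≤ s by omega)
    have hpc1 := filter_pi_card (n := n)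
      (fun x : ZMod (p^s) => (p : ZMod (p^s))^(s-a) * x = 0) hca1
    have hpc2 := filter_pi_card (n := n)
      (fun x : ZMod (p^s) => (p : ZMod (p^s))^(s-a-1) * x = 0) hca2
    have hdn := filter_and_not_card
      (fun c₀ : Fin n → ZMod (p^s) => ∀ r, (p : ZMod (p^s))^(s-a) * c₀ r = 0)
      (fun c₀ : Fin n → ZMod (p^s) => ∀ r, (p : ZMod (p^s))^(s-a-1) * c₀ r = 0)
      himp
    rw [hdn, hpc1, hpc2]
  rw [Finset.sum_congr rfl hinner]
  -- final arithmetic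
  rw [phi_eq_s12 hp hs n, phi_eq_s12 hp (show 1 ≤ s - j by omega) (n-1), gauss_eq p j]
  have hrefl : ∑ a ∈ Finset.range (j+1), p^a
      = ∑ a ∈ Finset.range (j+1), p^(j-a) := by
    rw [← Finset.sum_range_reflect]
    exact Finset.sum_congr rfl (fun a ha => by congr 1 <;> omega)
  rw [hrefl, Finset.mul_sum]
  refine Finset.sum_congr rfl (fun a ha => ?_)
  simp only [Finset.mem_range] at ha
  have haj : a ≤ j := by omega
  simp only [hN]
  -- term-wise identity
  obtain ⟨b, hb⟩ : ∃ b, j = a + b := ⟨j - a, by omega⟩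
  obtain ⟨q, hq⟩ : ∃ q, s = j + 1 + q := ⟨s - j - 1, by omega⟩
  obtain ⟨n1, hn1⟩ : ∃ n1, n = n1 + 1 := ⟨n - 1, by omega⟩
  have e1 : s - a = b + q + 1 := by omega
  have e2 : s - a - 1 = b + q := by omega
  have e3 : s - (j - a) = a + q + 1 := by omega
  have e4 : s - (j - a) - 1 = a + q := by omega
  have e5 : s - 1 = a + b + q := by omega
  have e6 : s - j = q + 1 := by omega
  have e7 : s - j - 1 = q := by omega
  have e8 : j - a = b := by omega
  have e9 : n - 1 = n1 := by omega
  have e10 : s = a + b + q + 1 := by omega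
  rw [e2, e1, e4, e3, e5, e7, e6, e8, e9, e10, hn1]
  have hple : 1 ≤ p := hp.pos
  have hle1 : (p^(b+q) : ℕ)^(n1+1) ≤ (p^(b+q+1))^(n1+1) :=
    Nat.pow_le_pow_left (Nat.pow_le_pow_right hple (by omega)) _
  have hle2 : (p : ℕ)^(a+b+q+1) * (p^(a+q))^n1 ≤ p^(a+b+q+1) * (p^(a+q+1))^n1 :=
    Nat.mul_le_mul_left _ (Nat.pow_le_pow_left (Nat.pow_le_pow_right hple (by omega)) _)
  have hle3 : (p^(a+b+q) : ℕ)^(n1+1) ≤ (p^(a+b+q+1))^(n1+1) :=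
    Nat.pow_le_pow_left (Nat.pow_le_pow_right hple (by omega)) _
  have hle4 : (p^q : ℕ)^n1 ≤ (p^(q+1))^n1 :=
    Nat.pow_le_pow_left (Nat.pow_le_pow_right hple (by omega)) _
  zify [hle1, hle2, hle3, hle4]
  ring
end

section
/- For n ≥ m ≥ 1, the number of n×m matrices A over Z_{p^s} such that Ax ≡ 0 (mod p^s) has a unique solution equals (p^s)^{m(m-1)/2} · ∏_{u=n-m+1}^{n} φ_u(p^s). -/
lemma phi_card (p s u : ℕ) (hp : p.Prime) (hs : 1 ≤ s) :
    phi u (p ^ s) = (p ^ s) ^ u - (p ^ (s - 1)) ^ u := by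
  classical
  unfold phi
  have hp1 : 1 ≤ p := hp.one_lt.le
  have htot : (Fintype.piFinset fun _ : Fin u => Finset.Icc 1 (p ^ s)).card = (p ^ s) ^ u := by
    simp [Fintype.card_piFinset]
  have hiff : ∀ a : ℕ, (¬ Nat.Coprime a (p ^ s)) ↔ p ∣ a := by
    intro a
    rw [Nat.coprime_pow_right_iff (by omega), Nat.coprime_comm,
      hp.coprime_iff_not_dvd, not_not]
  have hneg : (Finset.filter (fun a : Fin u → ℕ => ¬ ∃ i, Nat.Coprime (a i) (p ^ s))
      (Fintype.piFinset fun _ => Finset.Icc 1 (p ^ s)))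
      = Fintype.piFinset (fun _ : Fin u => (Finset.Icc 1 (p ^ s)).filter (p ∣ ·)) := by
    ext a
    simp only [Finset.mem_filter, Fintype.mem_piFinset, not_exists]
    constructor
    · rintro ⟨h1, h2⟩ i; exact ⟨h1 i, (hiff _).mp (h2 i)⟩
    · intro h; exact ⟨fun i => (h i).1, fun i => (hiff _).mpr (h i).2⟩
  have hdvd : ((Finset.Icc 1 (p ^ s)).filter (p ∣ ·)).card = p ^ (s - 1) := by
    rw [show (1 : ℕ) = 0 + 1 from rfl, Finset.Icc_add_one_left_eq_Ioc, Nat.Ioc_filter_dvd_card_eq_div]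
    have h2 : p ^ s / p = p ^ (s - 1) := by
      rw [← Nat.pow_div hs hp.pos, pow_one]
    simpa using h2
  have hnegcard : (Finset.filter (fun a : Fin u → ℕ => ¬ ∃ i, Nat.Coprime (a i) (p ^ s))
      (Fintype.piFinset fun _ => Finset.Icc 1 (p ^ s))).card = (p ^ (s - 1)) ^ u := by
    rw [hneg]; simp [Fintype.card_piFinset, hdvd]
  have hsplit : (Finset.filter (fun a : Fin u → ℕ => ∃ i, Nat.Coprime (a i) (p ^ s))
      (Fintype.piFinset fun _ => Finset.Icc 1 (p ^ s))).card
      + (Finset.filter (fun a : Fin u → ℕ => ¬ ∃ i, Nat.Coprime (a i) (p ^ s))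
      (Fintype.piFinset fun _ => Finset.Icc 1 (p ^ s))).card
      = (Fintype.piFinset fun _ : Fin u => Finset.Icc 1 (p ^ s)).card :=
    Finset.card_filter_add_card_filter_not
      (fun a : Fin u → ℕ => ∃ i, Nat.Coprime (a i) (p ^ s))
  rw [hnegcard, htot] at hsplit
  exact Nat.eq_sub_of_add_eq hsplit

lemma pi_zero_iff {p s : ℕ} (hp : p.Prime) (hs : 1 ≤ s) (r : ZMod (p ^ s)) :
    ZMod.castHom (dvd_pow_self p (by omega : s ≠ 0)) (ZMod p) r = 0 ↔ p ∣ r.val := by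
  haveI : NeZero (p ^ s) := ⟨pow_ne_zero _ hp.ne_zero⟩
  rw [ZMod.castHom_apply, ← ZMod.natCast_val, ZMod.natCast_eq_zero_iff]

lemma pow_mul_zero_iff {p s : ℕ} (hp : p.Prime) (hs : 1 ≤ s) (r : ZMod (p ^ s)) :
    (p : ZMod (p ^ s)) ^ (s - 1) * r = 0 ↔ p ∣ r.val := by
  haveI : NeZero (p ^ s) := ⟨pow_ne_zero _ hp.ne_zero⟩
  have h1 : (p : ZMod (p ^ s)) ^ (s - 1) * r = ((p ^ (s - 1) * r.val : ℕ) : ZMod (p ^ s)) := by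
    push_cast [ZMod.natCast_val, ZMod.cast_id]
    ring
  have hps : p ^ s = p ^ (s - 1) * p := by rw [← pow_succ]; congr 1; omega
  rw [h1, ZMod.natCast_eq_zero_iff]
  constructor
  · rintro ⟨c, hc⟩
    refine ⟨c, Nat.eq_of_mul_eq_mul_left (pow_pos hp.pos (s - 1)) ?_⟩
    rw [hc, hps]; ring
  · rintro ⟨c, hc⟩
    exact ⟨c, by rw [hc, hps]; ring⟩

lemma eq_p_mul {p s : ℕ} (hp : p.Prime) (hs : 1 ≤ s) (r : ZMod (p ^ s)) (h : p ∣ r.val) :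
    ∃ w : ZMod (p ^ s), r = (p : ZMod (p ^ s)) * w := by
  haveI : NeZero (p ^ s) := ⟨pow_ne_zero _ hp.ne_zero⟩
  obtain ⟨t, ht⟩ := h
  exact ⟨(t : ZMod (p ^ s)), by
    rw [← ZMod.natCast_zmod_val r, ht]; push_cast; ring⟩

lemma p_mul_zero {p s : ℕ} (hp : p.Prime) (hs : 1 ≤ s) (z : ZMod (p ^ s))
    (h : (p : ZMod (p ^ s)) * z = 0) :
    ∃ w : ZMod (p ^ s), z = (p : ZMod (p ^ s)) ^ (s - 1) * w := by
  haveI : NeZero (p ^ s) := ⟨pow_ne_zero _ hp.ne_zero⟩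
  have h1 : (p : ZMod (p ^ s)) * z = ((p * z.val : ℕ) : ZMod (p ^ s)) := by
    push_cast [ZMod.natCast_val, ZMod.cast_id]
    ring
  rw [h1, ZMod.natCast_eq_zero_iff] at h
  have hps : p ^ s = p * p ^ (s - 1) := by rw [← pow_succ']; congr 1; omega
  have h2 : p ^ (s - 1) ∣ z.val := by
    obtain ⟨c, hc⟩ := h
    refine ⟨c, Nat.eq_of_mul_eq_mul_left hp.pos ?_⟩
    rw [hc, hps]; ring
  obtain ⟨t, ht⟩ := h2
  exact ⟨(t : ZMod (p ^ s)), by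
    rw [← ZMod.natCast_zmod_val z, ht]; push_cast; ring⟩

lemma ker_iff {p s n m : ℕ} (hp : p.Prime) (hs : 1 ≤ s)
    (A : Matrix (Fin n) (Fin m) (ZMod (p ^ s))) :
    (∀ x : Fin m → ZMod (p ^ s), A.mulVec x = 0 → x = 0) ↔
    (∀ y : Fin m → ZMod p,
      (A.map (ZMod.castHom (dvd_pow_self p (by omega : s ≠ 0)) (ZMod p))).mulVec y = 0 →
        y = 0) := by
  classical
  haveI : NeZero (p ^ s) := ⟨pow_ne_zero _ hp.ne_zero⟩
  haveI : NeZero p := ⟨hp.ne_zero⟩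
  set π := ZMod.castHom (dvd_pow_self p (by omega : s ≠ 0)) (ZMod p) with hπ
  have hmap : ∀ (B : Matrix (Fin n) (Fin m) (ZMod (p ^ s))) (x : Fin m → ZMod (p ^ s)),
      (B.map π).mulVec (π ∘ x) = π ∘ (B.mulVec x) := by
    intro B x; funext i
    exact (RingHom.map_mulVec π B x i).symm
  constructor
  · -- trivial kernel over ZMod p^s → trivial kernel mod p
    intro h y hy
    set x : Fin m → ZMod (p ^ s) := fun j => ((y j).val : ZMod (p ^ s)) with hx
    have hpx : π ∘ x = y := by
      funext j
      simp only [hx, Function.comp_apply, map_natCast, ZMod.natCast_zmod_val]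
    have hAx : ∀ i, p ∣ (A.mulVec x i).val := by
      intro i
      have : π (A.mulVec x i) = 0 := by
        have h0 := congrFun (hmap A x) i
        rw [hpx] at h0
        have h1 : (⇑π ∘ A.mulVec x) i = 0 := by rw [← h0, hy]; rfl
        exact h1
      exact (pi_zero_iff hp hs _).mp this
    have hker : A.mulVec (fun j => (p : ZMod (p ^ s)) ^ (s - 1) * x j) = 0 := by
      funext i
      have h1 : A.mulVec (fun j => (p : ZMod (p ^ s)) ^ (s - 1) * x j) i
          = (p : ZMod (p ^ s)) ^ (s - 1) * A.mulVec x i := by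
        simp [Matrix.mulVec, dotProduct, Finset.mul_sum]; ring_nf
        exact Finset.sum_congr rfl fun j _ => by ring
      rw [h1, (pow_mul_zero_iff hp hs _).mpr (hAx i)]; rfl
    have hx0 := h _ hker
    funext j
    rw [← hpx]
    have : (p : ZMod (p ^ s)) ^ (s - 1) * x j = 0 := congrFun hx0 j
    simp only [Function.comp_apply]
    exact (pi_zero_iff hp hs _).mpr ((pow_mul_zero_iff hp hs _).mp this)
  · -- trivial kernel mod p → trivial kernel over ZMod p^s
    intro h x hx
    by_contra hne
    set P : ℕ → Prop := fun t => (fun j => (p : ZMod (p ^ s)) ^ t * x j) ≠ 0 with hP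
    have hP0 : P 0 := by
      simpa [hP] using hne
    set t := Nat.findGreatest P s with ht
    have hPt : P t := Nat.findGreatest_spec (Nat.zero_le s) hP0
    have hts : t < s := by
      rcases Nat.lt_or_ge t s with h' | h'
      · exact h'
      · exfalso
        have hts' : t ≤ s := Nat.findGreatest_le s
        have : t = s := le_antisymm hts' h'
        apply hPt
        funext j
        rw [this]
        have : ((p : ZMod (p ^ s)) ^ s) = 0 := by
          rw [← Nat.cast_pow, ZMod.natCast_self]
        simp [this]
    have hPt1 : ¬ P (t + 1) := Nat.findGreatest_is_greatest (Nat.lt_succ_self t) (by omega)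
    set z : Fin m → ZMod (p ^ s) := fun j => (p : ZMod (p ^ s)) ^ t * x j with hz
    have hz1 : ∀ j, (p : ZMod (p ^ s)) * z j = 0 := by
      intro j
      have : (fun j => (p : ZMod (p ^ s)) ^ (t + 1) * x j) = 0 := not_not.mp hPt1
      have := congrFun this j
      simpa [hz, pow_succ, mul_comm, mul_assoc, mul_left_comm] using this
    have hw : ∀ j, ∃ w, z j = (p : ZMod (p ^ s)) ^ (s - 1) * w :=
      fun j => p_mul_zero hp hs _ (hz1 j)
    choose w hwspec using hw
    have hAz : A.mulVec z = 0 := by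
      have h1 : A.mulVec z = fun i => (p : ZMod (p ^ s)) ^ t * A.mulVec x i := by
        funext i
        simp [hz, Matrix.mulVec, dotProduct, Finset.mul_sum]
        exact Finset.sum_congr rfl fun j _ => by ring
      rw [h1, hx]
      funext i; simp
    have hred : (A.map π).mulVec (π ∘ w) = 0 := by
      rw [hmap]
      funext i
      have h1 : A.mulVec z i = (p : ZMod (p ^ s)) ^ (s - 1) * A.mulVec w i := by
        simp only [Matrix.mulVec, dotProduct, Finset.mul_sum]
        rw [show z = fun j => (p : ZMod (p ^ s)) ^ (s - 1) * w j from funext hwspec]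
        exact Finset.sum_congr rfl fun j _ => by ring
      have h2 : (p : ZMod (p ^ s)) ^ (s - 1) * A.mulVec w i = 0 := by
        rw [← h1, hAz]; rfl
      simp only [Function.comp_apply, Pi.zero_apply]
      exact (pi_zero_iff hp hs _).mpr ((pow_mul_zero_iff hp hs _).mp h2)
    have hw0 := h _ hred
    apply hPt
    funext j
    have hπw : π (w j) = 0 := congrFun hw0 j
    obtain ⟨c, hc⟩ := eq_p_mul hp hs (w j) ((pi_zero_iff hp hs _).mp hπw)
    have : z j = 0 := by
      rw [hwspec j, hc, ← mul_assoc, ← pow_succ,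
        show s - 1 + 1 = s by omega, ← Nat.cast_pow, ZMod.natCast_self, zero_mul]
    simpa [hz] using this

lemma count_ker {p s n m : ℕ} (hp : p.Prime) (hs : 1 ≤ s) (hnm : m ≤ n) :
    Nat.card {A : Matrix (Fin n) (Fin m) (ZMod (p ^ s)) //
        ∀ x : Fin m → ZMod (p ^ s), A.mulVec x = 0 → x = 0}
      = (∏ i : Fin m, (p ^ n - p ^ (i : ℕ))) * (p ^ (s - 1)) ^ (n * m) := by
  classical
  haveI : NeZero (p ^ s) := ⟨pow_ne_zero _ hp.ne_zero⟩
  haveI : NeZero p := ⟨hp.ne_zero⟩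
  haveI : Fact p.Prime := ⟨hp⟩
  set π := ZMod.castHom (dvd_pow_self p (by omega : s ≠ 0)) (ZMod p) with hπ
  set lft : ZMod p → ZMod (p ^ s) := fun b => (b.val : ZMod (p ^ s)) with hlft
  have hπlft : ∀ b, π (lft b) = b := fun b => by
    simp [hlft, map_natCast, ZMod.natCast_zmod_val]
  rw [Nat.card_congr (Equiv.subtypeEquivRight fun A => ker_iff hp hs A)]
  have hkey : ∀ (B : Matrix (Fin n) (Fin m) (ZMod p)) (C : Matrix (Fin n) (Fin m) (ZMod (p ^ s))),
      C.map π = 0 → ((B.map lft) + C).map π = B := by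
    intro B C hC
    ext i j
    have hCij : π (C i j) = 0 := congrFun (congrFun hC i) j
    simp [Matrix.map_apply, Matrix.add_apply, map_add, hπlft, hCij]
  -- first equivalence: split into reduction and kernel part
  let e1 : {A : Matrix (Fin n) (Fin m) (ZMod (p ^ s)) //
        ∀ y : Fin m → ZMod p, (A.map π).mulVec y = 0 → y = 0} ≃
      {B : Matrix (Fin n) (Fin m) (ZMod p) // ∀ y, B.mulVec y = 0 → y = 0} ×
      {C : Matrix (Fin n) (Fin m) (ZMod (p ^ s)) // C.map π = 0} :=
    { toFun := fun A => (⟨A.1.map π, A.2⟩, ⟨A.1 - (A.1.map π).map lft, by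
        ext i j
        simp [Matrix.map_apply, Matrix.sub_apply, map_sub, hπlft]⟩)
      invFun := fun BC => ⟨(BC.1.1.map lft) + BC.2.1, by
        rw [hkey _ _ BC.2.2]; exact BC.1.2⟩
      left_inv := fun A => Subtype.ext (by
        ext i j
        simp [Matrix.map_apply, Matrix.add_apply, Matrix.sub_apply])
      right_inv := fun BC => by
        refine Prod.ext (Subtype.ext ?_) (Subtype.ext ?_)
        · exact hkey _ _ BC.2.2
        · show (BC.1.1.map lft + BC.2.1) - (((BC.1.1.map lft + BC.2.1).map π).map lft) = BC.2.1
          rw [hkey _ _ BC.2.2]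
          exact add_sub_cancel_left _ _ }
  rw [Nat.card_congr e1, Nat.card_prod]
  congr 1
  · -- count of injective matrices mod p
    have hli : ∀ B : Matrix (Fin n) (Fin m) (ZMod p),
        (∀ y, B.mulVec y = 0 → y = 0) ↔ LinearIndependent (ZMod p) B.transpose := by
      intro B
      refine Iff.trans ?_ Fintype.linearIndependent_iff.symm
      have hsum : ∀ g : Fin m → ZMod p, (∑ j, g j • B.transpose j) = B.mulVec g := by
        intro g; funext i
        simp [Matrix.mulVec, dotProduct, Matrix.transpose_apply, Finset.sum_apply,
          mul_comm]
      constructor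
      · intro hB g hg
        have h0 := hB g (by rw [← hsum g]; exact hg)
        exact fun i => congrFun h0 i
      · intro hB y hy
        funext j
        exact hB y (by rw [hsum]; exact hy) j
    let e4 : {B : Matrix (Fin n) (Fin m) (ZMod p) // ∀ y, B.mulVec y = 0 → y = 0} ≃
        {v : Fin m → (Fin n → ZMod p) // LinearIndependent (ZMod p) v} :=
      { toFun := fun B => ⟨B.1.transpose, (hli B.1).mp B.2⟩
        invFun := fun v => ⟨Matrix.of (fun i j => v.1 j i), (hli _).mpr v.2⟩
        left_inv := fun B => Subtype.ext rfl
        right_inv := fun v => Subtype.ext rfl }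
    rw [Nat.card_congr e4]
    have hfr : m ≤ Module.finrank (ZMod p) (Fin n → ZMod p) := by
      rw [Module.finrank_fintype_fun_eq_card, Fintype.card_fin]; exact hnm
    have := card_linearIndependent (K := ZMod p) (V := Fin n → ZMod p) hfr
    simpa [ZMod.card, Module.finrank_fintype_fun_eq_card] using this
  · -- count of matrices reducing to zero
    let e3 : {r : ZMod (p ^ s) // π r = 0} ≃ Fin (p ^ (s - 1)) :=
      { toFun := fun r => ⟨r.1.val / p, by
          have h1 : r.1.val < p ^ s := ZMod.val_lt r.1
          refine (Nat.div_lt_iff_lt_mul hp.pos).mpr ?_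
          rwa [← pow_succ, show s - 1 + 1 = s by omega]⟩
        invFun := fun i => ⟨((p * (i : ℕ) : ℕ) : ZMod (p ^ s)), by
          refine (pi_zero_iff hp hs _).mpr ?_
          rw [ZMod.val_natCast]
          exact (Nat.dvd_mod_iff (dvd_pow_self p (by omega : s ≠ 0))).mpr (dvd_mul_right _ _)⟩
        left_inv := fun r => Subtype.ext (by
          have hdvd : p ∣ r.1.val := (pi_zero_iff hp hs _).mp r.2
          show ((p * (r.1.val / p) : ℕ) : ZMod (p ^ s)) = r.1
          rw [Nat.mul_div_cancel' hdvd, ZMod.natCast_zmod_val])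
        right_inv := fun i => by
          have hlt : p * (i : ℕ) < p ^ s := by
            have := i.2
            calc p * (i : ℕ) < p * p ^ (s - 1) := by
                  exact mul_lt_mul_of_pos_left i.2 hp.pos
              _ = p ^ s := by rw [← pow_succ']; congr 1; omega
          apply Fin.ext
          show (((p * (i : ℕ) : ℕ) : ZMod (p ^ s))).val / p = (i : ℕ)
          rw [ZMod.val_natCast, Nat.mod_eq_of_lt hlt, Nat.mul_div_cancel_left _ hp.pos] }
    let e2 : {C : Matrix (Fin n) (Fin m) (ZMod (p ^ s)) // C.map π = 0} ≃
        (Fin n → Fin m → {r : ZMod (p ^ s) // π r = 0}) :=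
      { toFun := fun C i j => ⟨C.1 i j, congrFun (congrFun C.2 i) j⟩
        invFun := fun f => ⟨Matrix.of (fun i j => (f i j).1), by
          ext i j; exact (f i j).2⟩
        left_inv := fun C => Subtype.ext rfl
        right_inv := fun f => rfl }
    rw [Nat.card_congr (e2.trans (Equiv.arrowCongr (Equiv.refl _)
      (Equiv.arrowCongr (Equiv.refl _) e3)))]
    rw [Nat.card_fun, Nat.card_fun, Nat.card_eq_fintype_card (α := Fin (p ^ (s - 1))),
      Nat.card_eq_fintype_card (α := Fin m), Nat.card_eq_fintype_card (α := Fin n),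
      Fintype.card_fin, Fintype.card_fin, Fintype.card_fin, ← pow_mul, mul_comm m n]

lemma arith {p s n m : ℕ} (hp : p.Prime) (hs : 1 ≤ s) (hm : 1 ≤ m) (hnm : m ≤ n) :
    (∏ i : Fin m, (p ^ n - p ^ (i : ℕ))) * (p ^ (s - 1)) ^ (n * m)
      = (p ^ s) ^ (m * (m - 1) / 2) *
        ∏ u ∈ Finset.Icc (n - m + 1) n, ((p ^ s) ^ u - (p ^ (s - 1)) ^ u) := by
  obtain ⟨s', rfl⟩ : ∃ s', s = s' + 1 := ⟨s - 1, by omega⟩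
  simp only [Nat.add_sub_cancel]
  rw [Fin.prod_univ_eq_prod_range (fun i => p ^ n - p ^ i) m]
  -- reindex the RHS product
  have himg : Finset.Icc (n - m + 1) n = (Finset.range m).image (fun i => n - i) := by
    ext u
    simp only [Finset.mem_image, Finset.mem_range, Finset.mem_Icc]
    constructor
    · rintro ⟨h1, h2⟩; exact ⟨n - u, by omega, by omega⟩
    · rintro ⟨i, hi, rfl⟩; omega
  rw [himg, Finset.prod_image (by
    intro a ha b hb hab
    simp only [Finset.mem_coe, Finset.mem_range] at ha hb
    beta_reduce at hab
    omega)]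
  -- factor each term
  have hfac1 : ∀ i ∈ Finset.range m, p ^ n - p ^ i = p ^ i * (p ^ (n - i) - 1) := by
    intro i hi
    simp only [Finset.mem_range] at hi
    rw [Nat.mul_sub, mul_one, ← pow_add]
    congr 2
    omega
  have hfac2 : ∀ i ∈ Finset.range m,
      (p ^ (s' + 1)) ^ (n - i) - (p ^ s') ^ (n - i)
        = p ^ (s' * (n - i)) * (p ^ (n - i) - 1) := by
    intro i hi
    rw [Nat.mul_sub, mul_one, ← pow_add, ← pow_mul, ← pow_mul]
    congr 2
    ring
  rw [Finset.prod_congr rfl hfac1, Finset.prod_congr rfl hfac2,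
    Finset.prod_mul_distrib, Finset.prod_mul_distrib,
    Finset.prod_pow_eq_pow_sum, Finset.prod_pow_eq_pow_sum]
  -- now pure exponent bookkeeping
  have hST : (∑ i ∈ Finset.range m, (n - i)) + (∑ i ∈ Finset.range m, i) = n * m := by
    rw [← Finset.sum_add_distrib]
    rw [Finset.sum_congr rfl (fun i hi => by
      simp only [Finset.mem_range] at hi
      omega : ∀ i ∈ Finset.range m, (n - i) + i = n)]
    simp [Finset.sum_const, mul_comm]
  rw [← Finset.sum_range_id]
  set T := ∑ i ∈ Finset.range m, i with hT
  set S := ∑ i ∈ Finset.range m, (n - i) with hS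
  set W := ∏ i ∈ Finset.range m, (p ^ (n - i) - 1) with hW
  rw [← pow_mul, ← pow_mul, ← Finset.mul_sum, ← hST]
  ring

theorem E_unique (p s n m : ℕ) (hp : p.Prime) (hs : 1 ≤ s) (hm : 1 ≤ m) (hnm : m ≤ n) :
    E p s n m 0 = (p ^ s) ^ (m * (m - 1) / 2) * ∏ u ∈ Finset.Icc (n - m + 1) n, phi u (p ^ s) := by
  classical
  haveI : NeZero (p ^ s) := ⟨pow_ne_zero _ hp.ne_zero⟩
  have hEq : E p s n m 0 = Nat.card {A : Matrix (Fin n) (Fin m) (ZMod (p ^ s)) //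
      ∀ x : Fin m → ZMod (p ^ s), A.mulVec x = 0 → x = 0} := by
    unfold E
    refine Nat.card_congr (Equiv.subtypeEquivRight fun A => ?_)
    rw [pow_zero]
    constructor
    · intro h x hx
      haveI hsub : Subsingleton {x : Fin m → ZMod (p ^ s) // A.mulVec x = 0} :=
        (Nat.card_eq_one_iff_unique.mp h).1
      exact congrArg Subtype.val
        (Subsingleton.elim (⟨x, hx⟩ : {x : Fin m → ZMod (p ^ s) // A.mulVec x = 0})
          ⟨0, Matrix.mulVec_zero A⟩)
    · intro h
      rw [Nat.card_eq_one_iff_unique]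
      refine ⟨⟨fun a b => Subtype.ext ?_⟩, ⟨0, Matrix.mulVec_zero A⟩⟩
      rw [h a.1 a.2, h b.1 b.2]
  rw [hEq, count_ker hp hs hnm,
    Finset.prod_congr rfl (fun u _ => phi_card p s u hp hs)]
  exact arith hp hs hm hnm
end
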